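/- arXiv:1409.4610 — 12 statements merged into one kernel-verified Lean document; each statement's English description precedes it below -/
import Mathlib

section
/- Let k be a positive integer. If F and G are two intersecting k-families, each with exactly k+1 blocks, transversal size ⌈(k+1)/2⌉, and in which every vertex has degree exactly 2, then F and G are isomorphic: there is a bijection from the vertex set of F to the vertex set of G that maps the blocks of F exactly onto the blocks of G. -/
/-- `C` covers the family `F` if it meets every block of `F`. -/
def Covers (C : Finset ℕ) (F : Finset (Finset ℕ)) : Prop :=
  ∀ B ∈ F, (C ∩ B).Nonempty

/-- A family is intersecting if any two of its blocks meet. -/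
def IsIntersecting (F : Finset (Finset ℕ)) : Prop :=
  ∀ A ∈ F, ∀ B ∈ F, (A ∩ B).Nonempty

/-- The degree of a vertex `x` in `F`: the number of blocks containing `x`. -/
def deg (F : Finset (Finset ℕ)) (x : ℕ) : ℕ :=
  (F.filter (fun B => x ∈ B)).card

/-- The vertex set of a family: the union of its blocks. -/
def vertexSet (F : Finset (Finset ℕ)) : Finset ℕ :=
  F.sup id

/-- `F` has transversal size `t`: some `t`-set covers `F`, and no smaller set does. -/
def HasTransversalSize (F : Finset (Finset ℕ)) (t : ℕ) : Prop :=
  (∃ C : Finset ℕ, Covers C F ∧ C.card = t) ∧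
  ∀ C : Finset ℕ, Covers C F → t ≤ C.card

lemma mem_vertexSet {F : Finset (Finset ℕ)} {x : ℕ} :
    x ∈ vertexSet F ↔ ∃ B ∈ F, x ∈ B := by
  simp [vertexSet, Finset.mem_sup]

lemma inter_card_one (k : ℕ) (F : Finset (Finset ℕ))
    (hFk : ∀ B ∈ F, B.card = k)
    (hFi : IsIntersecting F) (hFlen : F.card = k + 1)
    (hFd : ∀ x ∈ vertexSet F, deg F x = 2) :
    ∀ A ∈ F, ∀ B ∈ F, A ≠ B → (A ∩ B).card = 1 := by
  classical
  intro A hA B hB hAB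
  -- the "other block" function on A
  set f : ℕ → Finset ℕ := fun x => ((F.filter (fun S => x ∈ S)).erase A).sup id with hfdef
  have hfilter : ∀ x ∈ A, F.filter (fun S => x ∈ S) = {A, f x} := by
    intro x hxA
    have hx : x ∈ vertexSet F := mem_vertexSet.2 ⟨A, hA, hxA⟩
    have h2 : (F.filter (fun S => x ∈ S)).card = 2 := hFd x hx
    have hAmem : A ∈ F.filter (fun S => x ∈ S) := Finset.mem_filter.2 ⟨hA, hxA⟩
    have h1 : ((F.filter (fun S => x ∈ S)).erase A).card = 1 := by
      rw [Finset.card_erase_of_mem hAmem, h2]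
    obtain ⟨C, hC⟩ := Finset.card_eq_one.1 h1
    have hfx : f x = C := by simp [hfdef, hC]
    rw [hfx, ← hC, Finset.insert_erase hAmem]
  have hmemf : ∀ x ∈ A, ∀ C ∈ F, C ≠ A → (x ∈ C ↔ f x = C) := by
    intro x hxA C hC hCA
    constructor
    · intro hxC
      have : C ∈ F.filter (fun S => x ∈ S) := Finset.mem_filter.2 ⟨hC, hxC⟩
      rw [hfilter x hxA] at this
      rcases Finset.mem_insert.1 this with h | h
      · exact absurd h hCA
      · exact (Finset.mem_singleton.1 h).symm
    · intro h
      have : C ∈ ({A, f x} : Finset (Finset ℕ)) := by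
        rw [← h]; exact Finset.mem_insert_of_mem (Finset.mem_singleton_self _)
      rw [← hfilter x hxA] at this
      exact (Finset.mem_filter.1 this).2
  have hsurj : ∀ C ∈ F.erase A, ∃ x ∈ A, f x = C := by
    intro C hC
    have hCF : C ∈ F := Finset.mem_of_mem_erase hC
    have hCA : C ≠ A := Finset.ne_of_mem_erase hC
    obtain ⟨x, hx⟩ := hFi A hA C hCF
    rw [Finset.mem_inter] at hx
    exact ⟨x, hx.1, (hmemf x hx.1 C hCF hCA).1 hx.2⟩
  have hcards : A.card = (F.erase A).card := by
    rw [hFk A hA, Finset.card_erase_of_mem hA, hFlen]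
    omega
  have hmaps : ∀ x ∈ A, f x ∈ F.erase A := by
    intro x hxA
    have h := hfilter x hxA
    have : f x ∈ F.filter (fun S => x ∈ S) := by
      rw [h]; exact Finset.mem_insert_of_mem (Finset.mem_singleton_self _)
    have hfF : f x ∈ F := (Finset.mem_filter.1 this).2 |> fun _ => (Finset.mem_filter.1 this).1
    have hfne : f x ≠ A := by
      intro hEq
      have hcard2 : ({A, f x} : Finset (Finset ℕ)).card = 2 := by
        rw [← h]
        have hx : x ∈ vertexSet F := mem_vertexSet.2 ⟨A, hA, hxA⟩
        exact hFd x hx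
      rw [hEq] at hcard2
      simp at hcard2
    exact Finset.mem_erase.2 ⟨hfne, hfF⟩
  have hinj : ∀ ⦃x⦄, x ∈ A → ∀ ⦃y⦄, y ∈ A → f x = f y → x = y := by
    have := Finset.inj_on_of_surj_on_of_card_le (s := A) (t := F.erase A)
      (fun x _ => f x) (fun x hx => hmaps x hx)
      (fun C hC => by obtain ⟨x, hx, hfx⟩ := hsurj C hC; exact ⟨x, hx, hfx⟩)
      (le_of_eq hcards)
    exact this
  -- now A ∩ B is a singleton
  have hBe : B ∈ F.erase A := Finset.mem_erase.2 ⟨hAB.symm, hB⟩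
  obtain ⟨x₀, hx₀A, hfx₀⟩ := hsurj B hBe
  have : A ∩ B = {x₀} := by
    ext y
    simp only [Finset.mem_inter, Finset.mem_singleton]
    constructor
    · rintro ⟨hyA, hyB⟩
      have hfy : f y = B := (hmemf y hyA B hB hAB.symm).1 hyB
      exact hinj hyA hx₀A (hfy.trans hfx₀.symm)
    · intro hyx
      subst hyx
      exact ⟨hx₀A, (hmemf y hx₀A B hB hAB.symm).2 hfx₀⟩
  rw [this, Finset.card_singleton]

/-- Any two intersecting `k`-families with `k+1` blocks, transversal size
`⌈(k+1)/2⌉`, and all vertex degrees equal to `2` are isomorphic: some bijection of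
vertex sets maps the blocks of one exactly onto the blocks of the other. -/
theorem Mk_unique (k : ℕ) (hk : 0 < k) (F G : Finset (Finset ℕ))
    (hFk : ∀ B ∈ F, B.card = k) (hGk : ∀ B ∈ G, B.card = k)
    (hFi : IsIntersecting F) (hGi : IsIntersecting G)
    (hFlen : F.card = k + 1) (hGlen : G.card = k + 1)
    (hFt : HasTransversalSize F ((k + 2) / 2))
    (hGt : HasTransversalSize G ((k + 2) / 2))
    (hFd : ∀ x ∈ vertexSet F, deg F x = 2)
    (hGd : ∀ x ∈ vertexSet G, deg G x = 2) :
    ∃ e : ℕ → ℕ, Set.BijOn e ↑(vertexSet F) ↑(vertexSet G) ∧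
      F.image (fun B => B.image e) = G := by
  classical
  have hcardFG : F.card = G.card := by rw [hFlen, hGlen]
  let eqv : {x // x ∈ F} ≃ {x // x ∈ G} := Finset.equivOfCardEq hcardFG
  set σ : Finset ℕ → Finset ℕ :=
    fun B => if h : B ∈ F then (eqv ⟨B, h⟩ : Finset ℕ) else ∅ with hσdef
  have hσG : ∀ B ∈ F, σ B ∈ G := by
    intro B h
    simp only [hσdef, dif_pos h]
    exact (eqv ⟨B, h⟩).2
  have hσinj : ∀ ⦃A⦄, A ∈ F → ∀ ⦃B⦄, B ∈ F → σ A = σ B → A = B := by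
    intro A hA B hB h
    simp only [hσdef, dif_pos hA, dif_pos hB] at h
    have := eqv.injective (Subtype.ext h)
    exact Subtype.ext_iff.1 this
  have hσim : F.image σ = G := by
    apply Finset.eq_of_subset_of_card_le
    · intro y hy
      obtain ⟨B, hB, rfl⟩ := Finset.mem_image.1 hy
      exact hσG B hB
    · rw [Finset.card_image_of_injOn (fun a ha b hb h => hσinj ha hb h), hFlen, hGlen]
  have hF1 := inter_card_one k F hFk hFi hFlen hFd
  have hG1 := inter_card_one k G hGk hGi hGlen hGd
  -- the two blocks through a vertex of F
  have hpair : ∀ x ∈ vertexSet F, ∃ A B, A ∈ F ∧ B ∈ F ∧ A ≠ B ∧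
      F.filter (fun S => x ∈ S) = {A, B} := by
    intro x hx
    have h2 : (F.filter (fun S => x ∈ S)).card = 2 := hFd x hx
    obtain ⟨A, B, hne, hAB⟩ := Finset.card_eq_two.1 h2
    have hAm : A ∈ F.filter (fun S => x ∈ S) := by
      rw [hAB]; exact Finset.mem_insert_self _ _
    have hBm : B ∈ F.filter (fun S => x ∈ S) := by
      rw [hAB]; exact Finset.mem_insert_of_mem (Finset.mem_singleton_self _)
    exact ⟨A, B, (Finset.mem_filter.1 hAm).1, (Finset.mem_filter.1 hBm).1, hne, hAB⟩
  set T : ℕ → Finset ℕ :=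
    fun x => (vertexSet G).filter (fun v => ∀ C ∈ F, x ∈ C → v ∈ σ C) with hTdef
  have hTspec : ∀ x, ∀ A B, A ∈ F → B ∈ F →
      F.filter (fun S => x ∈ S) = {A, B} → T x = σ A ∩ σ B := by
    intro x A B hA hB hfilt
    have hxA : x ∈ A := by
      have : A ∈ F.filter (fun S => x ∈ S) := by
        rw [hfilt]; exact Finset.mem_insert_self _ _
      exact (Finset.mem_filter.1 this).2
    have hxB : x ∈ B := by
      have : B ∈ F.filter (fun S => x ∈ S) := by
        rw [hfilt]; exact Finset.mem_insert_of_mem (Finset.mem_singleton_self _)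
      exact (Finset.mem_filter.1 this).2
    ext v
    simp only [hTdef, Finset.mem_filter, Finset.mem_inter]
    constructor
    · rintro ⟨-, h⟩
      exact ⟨h A hA hxA, h B hB hxB⟩
    · rintro ⟨hvA, hvB⟩
      refine ⟨mem_vertexSet.2 ⟨σ A, hσG A hA, hvA⟩, ?_⟩
      intro C hC hxC
      have : C ∈ F.filter (fun S => x ∈ S) := Finset.mem_filter.2 ⟨hC, hxC⟩
      rw [hfilt] at this
      rcases Finset.mem_insert.1 this with h | h
      · subst h; exact hvA
      · rw [Finset.mem_singleton.1 h]; exact hvB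
  set φ : ℕ → ℕ := fun x => if h : (T x).Nonempty then (T x).min' h else 0 with hφdef
  have hTsing : ∀ x ∈ vertexSet F, T x = {φ x} := by
    intro x hx
    obtain ⟨A, B, hA, hB, hne, hfilt⟩ := hpair x hx
    have hT : T x = σ A ∩ σ B := hTspec x A B hA hB hfilt
    have hc1 : (T x).card = 1 := by
      rw [hT]
      exact hG1 (σ A) (hσG A hA) (σ B) (hσG B hB)
        (fun h => hne (hσinj hA hB h))
    obtain ⟨v, hv⟩ := Finset.card_eq_one.1 hc1
    have hne' : (T x).Nonempty := by rw [hv]; exact Finset.singleton_nonempty _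
    have : φ x = v := by
      simp only [hφdef, dif_pos hne', hv, Finset.min'_singleton]
    rw [this, hv]
  have hmaps : ∀ x ∈ vertexSet F, φ x ∈ vertexSet G := by
    intro x hx
    have : φ x ∈ T x := by rw [hTsing x hx]; exact Finset.mem_singleton_self _
    exact (Finset.mem_filter.1 this).1
  -- φ maps each block A into σ A
  have hsub : ∀ A ∈ F, ∀ x ∈ A, φ x ∈ σ A := by
    intro A hA x hxA
    have hx : x ∈ vertexSet F := mem_vertexSet.2 ⟨A, hA, hxA⟩
    have hφT : φ x ∈ T x := by rw [hTsing x hx]; exact Finset.mem_singleton_self _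
    exact (Finset.mem_filter.1 hφT).2 A hA hxA
  -- injectivity
  have hinj : ∀ ⦃x⦄, x ∈ vertexSet F → ∀ ⦃y⦄, y ∈ vertexSet F → φ x = φ y → x = y := by
    intro x hx y hy hxy
    obtain ⟨A, B, hA, hB, hne, hfx⟩ := hpair x hx
    obtain ⟨A', B', hA', hB', hne', hfy⟩ := hpair y hy
    have hTx : T x = σ A ∩ σ B := hTspec x A B hA hB hfx
    have hTy : T y = σ A' ∩ σ B' := hTspec y A' B' hA' hB' hfy
    set v := φ x with hv
    have hvx : v ∈ σ A ∩ σ B := by rw [← hTx, hTsing x hx]; exact Finset.mem_singleton_self _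
    have hvy : v ∈ σ A' ∩ σ B' := by
      rw [← hTy, hTsing y hy, hxy]; exact Finset.mem_singleton_self _
    have hvV : v ∈ vertexSet G := mem_vertexSet.2 ⟨σ A, hσG A hA, (Finset.mem_inter.1 hvx).1⟩
    have hdv : (G.filter (fun S => v ∈ S)).card = 2 := hGd v hvV
    have hσne : σ A ≠ σ B := fun h => hne (hσinj hA hB h)
    have hσne' : σ A' ≠ σ B' := fun h => hne' (hσinj hA' hB' h)
    have hsub1 : ({σ A, σ B} : Finset (Finset ℕ)) ⊆ G.filter (fun S => v ∈ S) := by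
      intro C hC
      rcases Finset.mem_insert.1 hC with h | h
      · subst h; exact Finset.mem_filter.2 ⟨hσG A hA, (Finset.mem_inter.1 hvx).1⟩
      · rw [Finset.mem_singleton.1 h]
        exact Finset.mem_filter.2 ⟨hσG B hB, (Finset.mem_inter.1 hvx).2⟩
    have hsub2 : ({σ A', σ B'} : Finset (Finset ℕ)) ⊆ G.filter (fun S => v ∈ S) := by
      intro C hC
      rcases Finset.mem_insert.1 hC with h | h
      · subst h; exact Finset.mem_filter.2 ⟨hσG A' hA', (Finset.mem_inter.1 hvy).1⟩
      · rw [Finset.mem_singleton.1 h]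
        exact Finset.mem_filter.2 ⟨hσG B' hB', (Finset.mem_inter.1 hvy).2⟩
    have hcard1 : ({σ A, σ B} : Finset (Finset ℕ)).card = 2 := Finset.card_pair hσne
    have hcard2 : ({σ A', σ B'} : Finset (Finset ℕ)).card = 2 := Finset.card_pair hσne'
    have heq1 : ({σ A, σ B} : Finset (Finset ℕ)) = G.filter (fun S => v ∈ S) :=
      Finset.eq_of_subset_of_card_le hsub1 (by rw [hdv, hcard1])
    have heq2 : ({σ A', σ B'} : Finset (Finset ℕ)) = G.filter (fun S => v ∈ S) :=
      Finset.eq_of_subset_of_card_le hsub2 (by rw [hdv, hcard2])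
    have hpq : ({σ A', σ B'} : Finset (Finset ℕ)) = {σ A, σ B} := heq2.trans heq1.symm
    -- transfer back via injectivity of σ
    have hAB' : ({A', B'} : Finset (Finset ℕ)) ⊆ {A, B} := by
      intro C hC
      have hCF : C ∈ F := by
        rcases Finset.mem_insert.1 hC with h | h
        · subst h; exact hA'
        · rw [Finset.mem_singleton.1 h]; exact hB'
      have : σ C ∈ ({σ A, σ B} : Finset (Finset ℕ)) := by
        rw [← hpq]
        rcases Finset.mem_insert.1 hC with h | h
        · subst h; exact Finset.mem_insert_self _ _
        · rw [Finset.mem_singleton.1 h]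
          exact Finset.mem_insert_of_mem (Finset.mem_singleton_self _)
      rcases Finset.mem_insert.1 this with h | h
      · rw [hσinj hCF hA h]; exact Finset.mem_insert_self _ _
      · rw [hσinj hCF hB (Finset.mem_singleton.1 h)]
        exact Finset.mem_insert_of_mem (Finset.mem_singleton_self _)
    have hABeq : ({A', B'} : Finset (Finset ℕ)) = {A, B} :=
      Finset.eq_of_subset_of_card_le hAB'
        (by rw [Finset.card_pair hne, Finset.card_pair hne'])
    -- x, y both lie in A ∩ B, which is a singleton
    have hxAB : x ∈ A ∩ B := by
      have hA1 : A ∈ F.filter (fun S => x ∈ S) := by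
        rw [hfx]; exact Finset.mem_insert_self _ _
      have hB1 : B ∈ F.filter (fun S => x ∈ S) := by
        rw [hfx]; exact Finset.mem_insert_of_mem (Finset.mem_singleton_self _)
      exact Finset.mem_inter.2 ⟨(Finset.mem_filter.1 hA1).2, (Finset.mem_filter.1 hB1).2⟩
    have hyAB : y ∈ A ∩ B := by
      have hA1 : A' ∈ F.filter (fun S => y ∈ S) := by
        rw [hfy]; exact Finset.mem_insert_self _ _
      have hB1 : B' ∈ F.filter (fun S => y ∈ S) := by
        rw [hfy]; exact Finset.mem_insert_of_mem (Finset.mem_singleton_self _)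
      have hyA' : y ∈ A' := (Finset.mem_filter.1 hA1).2
      have hyB' : y ∈ B' := (Finset.mem_filter.1 hB1).2
      have hAmem : A ∈ ({A', B'} : Finset (Finset ℕ)) := by
        rw [hABeq]; exact Finset.mem_insert_self _ _
      have hBmem : B ∈ ({A', B'} : Finset (Finset ℕ)) := by
        rw [hABeq]; exact Finset.mem_insert_of_mem (Finset.mem_singleton_self _)
      have hyA : y ∈ A := by
        rcases Finset.mem_insert.1 hAmem with h | h
        · rw [h]; exact hyA'
        · rw [Finset.mem_singleton.1 h]; exact hyB'
      have hyB : y ∈ B := by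
        rcases Finset.mem_insert.1 hBmem with h | h
        · rw [h]; exact hyA'
        · rw [Finset.mem_singleton.1 h]; exact hyB'
      exact Finset.mem_inter.2 ⟨hyA, hyB⟩
    have hABcard : (A ∩ B).card = 1 := hF1 A hA B hB hne
    obtain ⟨z, hz⟩ := Finset.card_eq_one.1 hABcard
    rw [hz, Finset.mem_singleton] at hxAB hyAB
    rw [hxAB, hyAB]
  -- surjectivity
  have hsurj : ∀ v ∈ vertexSet G, ∃ x ∈ vertexSet F, φ x = v := by
    intro v hv
    have hdv : (G.filter (fun S => v ∈ S)).card = 2 := hGd v hv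
    obtain ⟨C, D, hCD, hfilt⟩ := Finset.card_eq_two.1 hdv
    have hCm : C ∈ G.filter (fun S => v ∈ S) := by
      rw [hfilt]; exact Finset.mem_insert_self _ _
    have hDm : D ∈ G.filter (fun S => v ∈ S) := by
      rw [hfilt]; exact Finset.mem_insert_of_mem (Finset.mem_singleton_self _)
    have hCG : C ∈ G := (Finset.mem_filter.1 hCm).1
    have hDG : D ∈ G := (Finset.mem_filter.1 hDm).1
    have hvC : v ∈ C := (Finset.mem_filter.1 hCm).2
    have hvD : v ∈ D := (Finset.mem_filter.1 hDm).2
    obtain ⟨A, hA, hσA⟩ := Finset.mem_image.1 (hσim ▸ hCG)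
    obtain ⟨B, hB, hσB⟩ := Finset.mem_image.1 (hσim ▸ hDG)
    have hne : A ≠ B := fun h => hCD (by rw [← hσA, ← hσB, h])
    obtain ⟨x, hx⟩ := Finset.card_eq_one.1 (hF1 A hA B hB hne)
    have hxA : x ∈ A := by
      have : x ∈ A ∩ B := by rw [hx]; exact Finset.mem_singleton_self _
      exact (Finset.mem_inter.1 this).1
    have hxB : x ∈ B := by
      have : x ∈ A ∩ B := by rw [hx]; exact Finset.mem_singleton_self _
      exact (Finset.mem_inter.1 this).2
    have hxV : x ∈ vertexSet F := mem_vertexSet.2 ⟨A, hA, hxA⟩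
    have hsubAB : ({A, B} : Finset (Finset ℕ)) ⊆ F.filter (fun S => x ∈ S) := by
      intro E hE
      rcases Finset.mem_insert.1 hE with h | h
      · subst h; exact Finset.mem_filter.2 ⟨hA, hxA⟩
      · rw [Finset.mem_singleton.1 h]; exact Finset.mem_filter.2 ⟨hB, hxB⟩
    have heqAB : ({A, B} : Finset (Finset ℕ)) = F.filter (fun S => x ∈ S) :=
      Finset.eq_of_subset_of_card_le hsubAB (by rw [Finset.card_pair hne]; exact le_of_eq (hFd x hxV))
    have hTx : T x = σ A ∩ σ B := hTspec x A B hA hB heqAB.symm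
    have hvT : v ∈ T x := by
      rw [hTx, hσA, hσB]; exact Finset.mem_inter.2 ⟨hvC, hvD⟩
    rw [hTsing x hxV, Finset.mem_singleton] at hvT
    exact ⟨x, hxV, hvT.symm⟩
  -- blocks map correctly
  have hblock : ∀ A ∈ F, A.image φ = σ A := by
    intro A hA
    apply Finset.eq_of_subset_of_card_le
    · intro y hy
      obtain ⟨x, hxA, rfl⟩ := Finset.mem_image.1 hy
      exact hsub A hA x hxA
    · have himg : (A.image φ).card = A.card := by
        apply Finset.card_image_of_injOn
        intro a ha b hb hab
        exact hinj (mem_vertexSet.2 ⟨A, hA, ha⟩) (mem_vertexSet.2 ⟨A, hA, hb⟩) hab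
      rw [himg, hFk A hA, hGk (σ A) (hσG A hA)]
  refine ⟨φ, ⟨?_, ?_, ?_⟩, ?_⟩
  · intro x hx
    exact hmaps x (Finset.mem_coe.1 hx)
  · intro x hx y hy h
    exact hinj (Finset.mem_coe.1 hx) (Finset.mem_coe.1 hy) h
  · intro v hv
    obtain ⟨x, hx, hφx⟩ := hsurj v (Finset.mem_coe.1 hv)
    exact ⟨x, Finset.mem_coe.2 hx, hφx⟩
  · rw [Finset.image_congr (fun A hA => hblock A (Finset.mem_coe.1 hA)), hσim]
end

section
/- Let k be a positive integer. If F is an intersecting k-family in which every vertex has degree exactly 2 and any two distinct blocks intersect in exactly one vertex, then F has exactly k+1 blocks, its vertex set has exactly k(k+1)/2 elements, and its transversal size is ⌈(k+1)/2⌉. -/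
lemma covers_mono {C D : Finset ℕ} {F : Finset (Finset ℕ)} (h : C ⊆ D) (hC : Covers C F) :
    Covers D F := by
  intro B hB
  obtain ⟨x, hx⟩ := hC B hB
  rw [Finset.mem_inter] at hx
  exact ⟨x, Finset.mem_inter.2 ⟨h hx.1, hx.2⟩⟩

/-- Greedy pairing of blocks gives a small cover. -/
lemma cover_exists : ∀ n (F : Finset (Finset ℕ)), F.card ≤ n → IsIntersecting F →
    ∃ C : Finset ℕ, Covers C F ∧ 2 * C.card ≤ F.card + 1 := by
  intro n
  induction n with
  | zero =>
    intro F hF _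
    have : F = ∅ := Finset.card_eq_zero.mp (Nat.le_zero.mp hF)
    subst this
    exact ⟨∅, fun B hB => absurd hB (by simp), by simp⟩
  | succ n ih =>
    intro F hF hFi
    rcases lt_or_ge F.card 2 with h2 | h2
    · rcases Finset.eq_empty_or_nonempty F with rfl | ⟨B, hB⟩
      · exact ⟨∅, fun B hB => absurd hB (by simp), by simp⟩
      · obtain ⟨x, hx⟩ := hFi B hB B hB
        rw [Finset.mem_inter] at hx
        have hcard : 0 < F.card := Finset.card_pos.mpr ⟨B, hB⟩
        refine ⟨{x}, ?_, ?_⟩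
        · intro B' hB'
          have hB'B : B' = B :=
            Finset.card_le_one.mp (by omega) B' hB' B hB
          subst hB'B
          exact ⟨x, Finset.mem_inter.2 ⟨Finset.mem_singleton_self x, hx.1⟩⟩
        · rw [Finset.card_singleton]
          omega
    · obtain ⟨A, hA, B, hB, hAB⟩ := Finset.one_lt_card.mp (show 1 < F.card by omega)
      obtain ⟨x, hx⟩ := hFi A hA B hB
      rw [Finset.mem_inter] at hx
      set F' := (F.erase A).erase B with hF'
      have hBerase : B ∈ F.erase A := Finset.mem_erase.2 ⟨fun h => hAB h.symm, hB⟩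
      have hF'card : F'.card = F.card - 2 := by
        rw [hF', Finset.card_erase_of_mem hBerase, Finset.card_erase_of_mem hA]
        omega
      have hsub : F' ⊆ F := (Finset.erase_subset _ _).trans (Finset.erase_subset _ _)
      have hF'i : IsIntersecting F' := fun A' hA' B' hB' => hFi A' (hsub hA') B' (hsub hB')
      obtain ⟨C', hC', hC'card⟩ := ih F' (by omega) hF'i
      refine ⟨insert x C', ?_, ?_⟩
      · intro B' hB'
        by_cases hA' : B' = A
        · exact ⟨x, Finset.mem_inter.2 ⟨Finset.mem_insert_self _ _, hA' ▸ hx.1⟩⟩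
        by_cases hB'' : B' = B
        · exact ⟨x, Finset.mem_inter.2 ⟨Finset.mem_insert_self _ _, hB'' ▸ hx.2⟩⟩
        · have : B' ∈ F' := Finset.mem_erase.2 ⟨hB'', Finset.mem_erase.2 ⟨hA', hB'⟩⟩
          exact covers_mono (Finset.subset_insert _ _) hC' B' this
      · have := Finset.card_insert_le x C'
        omega

/-- An intersecting `k`-family in which every vertex has degree exactly `2`
and any two distinct blocks meet in exactly one vertex has `k+1` blocks, `k(k+1)/2`
vertices, and transversal size `⌈(k+1)/2⌉`. -/
theorem Mk_characterization (k : ℕ) (hk : 0 < k) (F : Finset (Finset ℕ))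
    (hne : F.Nonempty)
    (hFk : ∀ B ∈ F, B.card = k)
    (hFi : IsIntersecting F)
    (hdeg : ∀ x ∈ vertexSet F, deg F x = 2)
    (hone : ∀ A ∈ F, ∀ B ∈ F, A ≠ B → (A ∩ B).card = 1) :
    F.card = k + 1 ∧
    (vertexSet F).card = k * (k + 1) / 2 ∧
    HasTransversalSize F ((k + 2) / 2) := by
  -- blocks are subsets of the vertex set
  have hsubV : ∀ B ∈ F, B ⊆ vertexSet F := by
    intro B hB x hx
    exact Finset.mem_sup.2 ⟨B, hB, hx⟩
  -- degree of any vertex of a block is 2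
  have hdeg2 : ∀ B ∈ F, ∀ x ∈ B, deg F x = 2 := fun B hB x hx => hdeg x (hsubV B hB hx)
  -- Step 1 : F.card = k + 1
  obtain ⟨B₀, hB₀⟩ := hne
  have key : ∑ A ∈ F.erase B₀, (A ∩ B₀).card = ∑ x ∈ B₀, ((F.erase B₀).filter (fun A => x ∈ A)).card := by
    have h1 : ∀ A : Finset ℕ, (A ∩ B₀).card = ∑ x ∈ B₀, if x ∈ A then 1 else 0 := by
      intro A
      rw [← Finset.card_filter]
      congr 1
      ext x
      simp [Finset.mem_inter, Finset.mem_filter, and_comm]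
    calc ∑ A ∈ F.erase B₀, (A ∩ B₀).card
        = ∑ A ∈ F.erase B₀, ∑ x ∈ B₀, if x ∈ A then 1 else 0 := by
          exact Finset.sum_congr rfl fun A _ => h1 A
      _ = ∑ x ∈ B₀, ∑ A ∈ F.erase B₀, if x ∈ A then 1 else 0 := Finset.sum_comm
      _ = ∑ x ∈ B₀, ((F.erase B₀).filter (fun A => x ∈ A)).card := by
          exact Finset.sum_congr rfl fun x _ => (Finset.card_filter _ _).symm
  have hleft : ∑ A ∈ F.erase B₀, (A ∩ B₀).card = F.card - 1 := by
    have h := Finset.sum_congr rfl (fun A hA =>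
      hone A (Finset.mem_of_mem_erase hA) B₀ hB₀ (Finset.ne_of_mem_erase hA))
    rw [h, Finset.sum_const, smul_eq_mul, mul_one, Finset.card_erase_of_mem hB₀]
  have hright : ∑ x ∈ B₀, ((F.erase B₀).filter (fun A => x ∈ A)).card = k := by
    have : ∀ x ∈ B₀, ((F.erase B₀).filter (fun A => x ∈ A)).card = 1 := by
      intro x hx
      rw [Finset.filter_erase]
      have hBmem : B₀ ∈ F.filter (fun A => x ∈ A) := Finset.mem_filter.2 ⟨hB₀, hx⟩
      rw [Finset.card_erase_of_mem hBmem]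
      have : (F.filter (fun A => x ∈ A)).card = 2 := hdeg2 B₀ hB₀ x hx
      omega
    rw [Finset.sum_congr rfl this, Finset.sum_const, smul_eq_mul, mul_one, hFk B₀ hB₀]
  have hFcard : F.card = k + 1 := by
    have hpos : 0 < F.card := Finset.card_pos.mpr ⟨B₀, hB₀⟩
    omega
  -- Step 2 : vertex count
  have handshake : ∑ B ∈ F, B.card = ∑ x ∈ vertexSet F, deg F x := by
    have h1 : ∀ B ∈ F, B.card = ∑ x ∈ vertexSet F, if x ∈ B then 1 else 0 := by
      intro B hB
      rw [← Finset.card_filter]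
      congr 1
      ext x
      simp only [Finset.mem_filter]
      exact ⟨fun h => ⟨hsubV B hB h, h⟩, fun h => h.2⟩
    calc ∑ B ∈ F, B.card = ∑ B ∈ F, ∑ x ∈ vertexSet F, if x ∈ B then 1 else 0 :=
          Finset.sum_congr rfl h1
      _ = ∑ x ∈ vertexSet F, ∑ B ∈ F, if x ∈ B then 1 else 0 := Finset.sum_comm
      _ = ∑ x ∈ vertexSet F, deg F x := by
          exact Finset.sum_congr rfl fun x _ => (Finset.card_filter _ _).symm
  have hVcard : (vertexSet F).card = k * (k + 1) / 2 := by
    have h1 : ∑ B ∈ F, B.card = k * (k + 1) := by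
      rw [Finset.sum_congr rfl hFk, Finset.sum_const, smul_eq_mul, hFcard]
      ring
    have h2 : ∑ x ∈ vertexSet F, deg F x = 2 * (vertexSet F).card := by
      rw [Finset.sum_congr rfl hdeg, Finset.sum_const, smul_eq_mul]
      ring
    have : 2 * (vertexSet F).card = k * (k + 1) := by rw [← h2, ← handshake, h1]
    omega
  -- Step 3 : transversal size
  refine ⟨hFcard, hVcard, ?_, ?_⟩
  · obtain ⟨C, hC, hCcard⟩ := cover_exists F.card F le_rfl hFi
    rw [hFcard] at hCcard
    have hle : C.card ≤ (k + 2) / 2 := by omega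
    obtain ⟨D, hCD, hDcard⟩ := Infinite.exists_superset_card_eq C ((k + 2) / 2) hle
    exact ⟨D, covers_mono hCD hC, hDcard⟩
  · intro C hC
    -- every block is covered, each vertex covers at most 2 blocks
    have hsub : F ⊆ C.biUnion (fun x => F.filter (fun B => x ∈ B)) := by
      intro B hB
      obtain ⟨x, hx⟩ := hC B hB
      rw [Finset.mem_inter] at hx
      exact Finset.mem_biUnion.2 ⟨x, hx.1, Finset.mem_filter.2 ⟨hB, hx.2⟩⟩
    have hdegle : ∀ x : ℕ, (F.filter (fun B => x ∈ B)).card ≤ 2 := by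
      intro x
      rcases Finset.eq_empty_or_nonempty (F.filter (fun B => x ∈ B)) with h | ⟨B, hB⟩
      · simp [h]
      · rw [Finset.mem_filter] at hB
        have : x ∈ vertexSet F := hsubV B hB.1 hB.2
        exact le_of_eq (hdeg x this)
    have : F.card ≤ 2 * C.card := by
      calc F.card ≤ (C.biUnion (fun x => F.filter (fun B => x ∈ B))).card :=
            Finset.card_le_card hsub
        _ ≤ ∑ x ∈ C, (F.filter (fun B => x ∈ B)).card := Finset.card_biUnion_le
        _ ≤ ∑ _x ∈ C, 2 := Finset.sum_le_sum fun x _ => hdegle x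
        _ = 2 * C.card := by rw [Finset.sum_const, smul_eq_mul]; ring
    rw [hFcard] at this
    omega
end

section
/- Let k > 1. Suppose F is an intersecting k-family of transversal size k that has minimal length among all intersecting k-families of transversal size k. Then either F has a vertex of degree at least 3, or k = 2 (and F consists of three 2-sets pairwise meeting in exactly one vertex, with every vertex of degree 2). -/
/-- Any intersecting family `G` with nonempty blocks has a cover of size at most
`⌈|G|/2⌉`: pair off blocks by shared points. -/
lemma cover_half (F : Finset (Finset ℕ)) (hFi : IsIntersecting F)
    (hne : ∀ B ∈ F, B.Nonempty) :
    ∀ n (G : Finset (Finset ℕ)), G ⊆ F → G.card ≤ n →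
      ∃ C : Finset ℕ, Covers C G ∧ 2 * C.card ≤ G.card + 1 := by
  intro n
  induction n with
  | zero =>
    intro G _ hc
    refine ⟨∅, ?_, by simp⟩
    intro B hB
    rw [Finset.card_eq_zero.mp (Nat.le_zero.mp hc)] at hB
    simp at hB
  | succ n ih =>
    intro G hG hc
    rcases Nat.lt_or_ge G.card 2 with h2 | h2
    · rcases Finset.eq_empty_or_nonempty G with rfl | ⟨A, hA⟩
      · exact ⟨∅, by intro B hB; simp at hB, by simp⟩
      · obtain ⟨a, ha⟩ := hne A (hG hA)
        refine ⟨{a}, ?_, ?_⟩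
        · intro B hB
          have hBA : B = A :=
            Finset.card_le_one.mp (by omega : G.card ≤ 1) B hB A hA
          exact ⟨a, by simp [hBA, ha]⟩
        · have : (1 : ℕ) ≤ G.card := Finset.card_pos.mpr ⟨A, hA⟩
          simp only [Finset.card_singleton]
          omega
    · obtain ⟨A, hA, B, hB, hAB⟩ := Finset.one_lt_card.mp h2
      obtain ⟨x, hx⟩ := hFi A (hG hA) B (hG hB)
      rw [Finset.mem_inter] at hx
      set G' := (G.erase A).erase B with hG'def
      have hsub : G' ⊆ G := (Finset.erase_subset _ _).trans (Finset.erase_subset _ _)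
      have hBmem : B ∈ G.erase A := Finset.mem_erase.mpr ⟨fun h => hAB h.symm, hB⟩
      have hcard : G'.card + 2 = G.card := by
        rw [hG'def, Finset.card_erase_of_mem hBmem, Finset.card_erase_of_mem hA]
        omega
      obtain ⟨C', hC', hc'⟩ := ih G' (hsub.trans hG) (by omega)
      refine ⟨insert x C', ?_, ?_⟩
      · intro D hD
        by_cases hDA : D = A
        · exact ⟨x, Finset.mem_inter.mpr ⟨Finset.mem_insert_self _ _, hDA ▸ hx.1⟩⟩
        by_cases hDB : D = B
        · exact ⟨x, Finset.mem_inter.mpr ⟨Finset.mem_insert_self _ _, hDB ▸ hx.2⟩⟩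
        have hD' : D ∈ G' := Finset.mem_erase.mpr ⟨hDB, Finset.mem_erase.mpr ⟨hDA, hD⟩⟩
        obtain ⟨y, hy⟩ := hC' D hD'
        rw [Finset.mem_inter] at hy
        exact ⟨y, Finset.mem_inter.mpr ⟨Finset.mem_insert_of_mem hy.1, hy.2⟩⟩
      · have := Finset.card_insert_le x C'
        omega

/-- If `F` is an intersecting `k`-family (`k > 1`) of transversal size `k`
of minimal length among all such families, then either `F` has a vertex of degree at
least `3`, or `k = 2` and `F` consists of three `2`-sets pairwise meeting in exactly
one vertex with every vertex of degree `2`. -/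
theorem dichotomy (k : ℕ) (hk : 1 < k) (F : Finset (Finset ℕ))
    (hFk : ∀ B ∈ F, B.card = k)
    (hFi : IsIntersecting F)
    (hFt : HasTransversalSize F k)
    (hmin : ∀ G : Finset (Finset ℕ), (∀ B ∈ G, B.card = k) →
      IsIntersecting G → HasTransversalSize G k → F.card ≤ G.card) :
    (∃ x : ℕ, 3 ≤ deg F x) ∨
    (k = 2 ∧ F.card = 3 ∧
      (∀ A ∈ F, ∀ B ∈ F, A ≠ B → (A ∩ B).card = 1) ∧
      (∀ x ∈ vertexSet F, deg F x = 2)) := by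
  by_cases h3 : ∃ x : ℕ, 3 ≤ deg F x
  · exact Or.inl h3
  push_neg at h3
  right
  obtain ⟨_, hτ⟩ := hFt
  have hne : ∀ B ∈ F, B.Nonempty := fun B hB =>
    Finset.card_pos.mp (by rw [hFk B hB]; omega)
  -- F is nonempty
  have hFne : F.Nonempty := by
    rcases Finset.eq_empty_or_nonempty F with rfl | h
    · have := hτ ∅ (by intro B hB; simp at hB)
      simp at this; omega
    · exact h
  obtain ⟨B₀, hB₀⟩ := hFne
  -- |F| ≤ k + 1 : each block other than B₀ meets B₀ in a vertex of degree ≤ 2,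
  -- giving an injection from F.erase B₀ into B₀.
  have hFle : F.card ≤ k + 1 := by
    classical
    set f : Finset ℕ → ℕ := fun A =>
      if h : (A ∩ B₀).Nonempty then h.choose else 0 with hf
    have hfmem : ∀ A ∈ F, f A ∈ A ∩ B₀ := by
      intro A hA
      have h := hFi A hA B₀ hB₀
      simp only [hf, dif_pos h]
      exact h.choose_spec
    have hle : (F.erase B₀).card ≤ B₀.card := by
      apply Finset.card_le_card_of_injOn f
      · intro A hA
        have hA' := Finset.mem_of_mem_erase hA
        exact (Finset.mem_inter.mp (hfmem A hA')).2
      · intro A₁ h₁ A₂ h₂ hfeq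
        by_contra hne12
        obtain ⟨hA₁ne, hA₁⟩ := Finset.mem_erase.mp h₁
        obtain ⟨hA₂ne, hA₂⟩ := Finset.mem_erase.mp h₂
        set x := f A₁ with hx
        have hx1 := Finset.mem_inter.mp (hfmem A₁ hA₁)
        have hx2 := Finset.mem_inter.mp (hfmem A₂ hA₂)
        rw [← hfeq] at hx2
        have hsub : ({A₁, A₂, B₀} : Finset (Finset ℕ)) ⊆
            F.filter (fun B => x ∈ B) := by
          intro D hD
          simp only [Finset.mem_insert, Finset.mem_singleton] at hD
          rcases hD with rfl | rfl | rfl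
          · exact Finset.mem_filter.mpr ⟨hA₁, hx1.1⟩
          · exact Finset.mem_filter.mpr ⟨hA₂, hx2.1⟩
          · exact Finset.mem_filter.mpr ⟨hB₀, hx1.2⟩
        have hcard3 : ({A₁, A₂, B₀} : Finset (Finset ℕ)).card = 3 := by
          rw [Finset.card_insert_of_notMem, Finset.card_insert_of_notMem,
            Finset.card_singleton]
          · simp [hA₂ne]
          · simp only [Finset.mem_insert, Finset.mem_singleton]
            push_neg
            exact ⟨hne12, hA₁ne⟩
        have := Finset.card_le_card hsub
        rw [hcard3] at this
        exact absurd this (by have := h3 x; unfold deg at this; omega)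
    rw [Finset.card_erase_of_mem hB₀, hFk B₀ hB₀] at hle
    omega
  -- a cover of size ≤ ⌈|F|/2⌉
  obtain ⟨C, hC, hCc⟩ := cover_half F hFi hne F.card F (Finset.Subset.refl F) le_rfl
  have hkC := hτ C hC
  have hk2 : k = 2 := by omega
  have hF3 : F.card = 3 := by omega
  refine ⟨hk2, hF3, ?_, ?_⟩
  · -- pairwise intersections have size 1
    intro A hA B hB hAB
    have hABne := hFi A hA B hB
    have h1 : 1 ≤ (A ∩ B).card := Finset.card_pos.mpr hABne
    have hsubA : A ∩ B ⊆ A := Finset.inter_subset_left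
    have hcA : A.card = 2 := by rw [hFk A hA]; omega
    have hcB : B.card = 2 := by rw [hFk B hB]; omega
    by_contra hne1
    have h2 : 2 ≤ (A ∩ B).card := by
      have := Finset.card_le_card hsubA
      omega
    have heqA : A ∩ B = A :=
      Finset.eq_of_subset_of_card_le hsubA (by omega)
    have heqB : A ∩ B = B :=
      Finset.eq_of_subset_of_card_le Finset.inter_subset_right (by omega)
    exact hAB (heqA ▸ heqB)
  · -- all degrees are 2
    intro x hx
    rw [vertexSet, Finset.mem_sup] at hx
    obtain ⟨A, hA, hxA⟩ := hx
    simp only [id] at hxA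
    have hd1 : 1 ≤ deg F x :=
      Finset.card_pos.mpr ⟨A, Finset.mem_filter.mpr ⟨hA, hxA⟩⟩
    have hd2 : deg F x ≤ 2 := by have := h3 x; omega
    by_contra hdne
    have hdeg1 : deg F x = 1 := by omega
    -- so A is the only block containing x
    have hfilt : F.filter (fun B => x ∈ B) = {A} := by
      apply Finset.eq_singleton_iff_unique_mem.mpr
      refine ⟨Finset.mem_filter.mpr ⟨hA, hxA⟩, ?_⟩
      intro D hD
      have h1 := Finset.card_eq_one.mp hdeg1
      obtain ⟨a, ha⟩ := h1
      rw [ha] at hD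
      have hAa : A = a := by
        have : A ∈ ({a} : Finset (Finset ℕ)) := ha ▸ Finset.mem_filter.mpr ⟨hA, hxA⟩
        simpa using this
      simp only [Finset.mem_singleton] at hD
      rw [hD, hAa]
    -- the two other blocks
    have hcardE : (F.erase A).card = 2 := by
      rw [Finset.card_erase_of_mem hA, hF3]
    obtain ⟨B, hBm, D, hDm, hBD⟩ := Finset.one_lt_card.mp (by omega : 1 < (F.erase A).card)
    obtain ⟨hBne, hBF⟩ := Finset.mem_erase.mp hBm
    obtain ⟨hDne, hDF⟩ := Finset.mem_erase.mp hDm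
    have hxB : x ∉ B := fun h => hBne (by
      have : B ∈ F.filter (fun B => x ∈ B) := Finset.mem_filter.mpr ⟨hBF, h⟩
      rw [hfilt] at this; simpa using this)
    have hxD : x ∉ D := fun h => hDne (by
      have : D ∈ F.filter (fun B => x ∈ B) := Finset.mem_filter.mpr ⟨hDF, h⟩
      rw [hfilt] at this; simpa using this)
    -- A = {x, y}; B and D must both contain y
    have hcA : A.card = 2 := by rw [hFk A hA]; omega
    have hAex : (A.erase x).card = 1 := by
      rw [Finset.card_erase_of_mem hxA, hcA]
    obtain ⟨y, hy⟩ := Finset.card_eq_one.mp hAex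
    have hyA : y ∈ A := Finset.mem_of_mem_erase (hy ▸ Finset.mem_singleton_self y)
    have hmemy : ∀ E, E ∈ F → E ≠ A → x ∉ E → y ∈ E := by
      intro E hEF _ hxE
      obtain ⟨z, hz⟩ := hFi E hEF A hA
      rw [Finset.mem_inter] at hz
      have hzx : z ≠ x := fun h => hxE (h ▸ hz.1)
      have : z ∈ A.erase x := Finset.mem_erase.mpr ⟨hzx, hz.2⟩
      rw [hy] at this
      simp only [Finset.mem_singleton] at this
      exact this ▸ hz.1
    have hyB : y ∈ B := hmemy B hBF hBne hxB
    have hyD : y ∈ D := hmemy D hDF hDne hxD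
    -- then y has degree ≥ 3
    have hsub : ({A, B, D} : Finset (Finset ℕ)) ⊆ F.filter (fun E => y ∈ E) := by
      intro E hE
      simp only [Finset.mem_insert, Finset.mem_singleton] at hE
      rcases hE with rfl | rfl | rfl
      · exact Finset.mem_filter.mpr ⟨hA, hyA⟩
      · exact Finset.mem_filter.mpr ⟨hBF, hyB⟩
      · exact Finset.mem_filter.mpr ⟨hDF, hyD⟩
    have hcard3 : ({A, B, D} : Finset (Finset ℕ)).card = 3 := by
      rw [Finset.card_insert_of_notMem, Finset.card_insert_of_notMem,
        Finset.card_singleton]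
      · simp [hBD]
      · simp only [Finset.mem_insert, Finset.mem_singleton]
        push_neg
        exact ⟨fun h => hBne h.symm, fun h => hDne h.symm⟩
    have hle := Finset.card_le_card hsub
    rw [hcard3] at hle
    have := h3 y
    unfold deg at this
    omega
end

section
/- Let k ≥ 2 and let F be an intersecting k-family in which every vertex has degree at most 2. If two distinct blocks of F intersect in at least two vertices, then the transversal size of F is at most k−1. -/
/-- If `k ≥ 2` and `F` is an intersecting `k`-family with all vertex
degrees at most `2` in which two distinct blocks meet in at least two vertices, then
the transversal size of `F` is at most `k - 1`. -/
theorem tau_le_of_big_intersection (k : ℕ) (hk : 2 ≤ k) (F : Finset (Finset ℕ))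
    (hFk : ∀ B ∈ F, B.card = k)
    (hFi : IsIntersecting F)
    (hdeg : ∀ x : ℕ, deg F x ≤ 2)
    (A B : Finset ℕ) (hA : A ∈ F) (hB : B ∈ F) (hAB : A ≠ B)
    (hint : 2 ≤ (A ∩ B).card) :
    ∃ C : Finset ℕ, Covers C F ∧ C.card ≤ k - 1 := by
  obtain ⟨x, hx⟩ : (A ∩ B).Nonempty := Finset.card_pos.mp (by omega)
  have hxA : x ∈ A := (Finset.mem_inter.mp hx).1
  have hxB : x ∈ B := (Finset.mem_inter.mp hx).2
  refine ⟨insert x (A \ B), ?_, ?_⟩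
  · intro D hD
    by_cases hDA : D = A
    · exact ⟨x, Finset.mem_inter.mpr ⟨Finset.mem_insert_self _ _, hDA ▸ hxA⟩⟩
    by_cases hDB : D = B
    · exact ⟨x, Finset.mem_inter.mpr ⟨Finset.mem_insert_self _ _, hDB ▸ hxB⟩⟩
    obtain ⟨y, hy⟩ := hFi D hD A hA
    have hyD : y ∈ D := (Finset.mem_inter.mp hy).1
    have hyA : y ∈ A := (Finset.mem_inter.mp hy).2
    have hyB : y ∉ B := by
      intro hyB
      have hsub : ({A, B, D} : Finset (Finset ℕ)) ⊆ F.filter (fun Bl => y ∈ Bl) := by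
        intro E hE
        simp only [Finset.mem_insert, Finset.mem_singleton] at hE
        rcases hE with rfl | rfl | rfl <;>
          exact Finset.mem_filter.mpr ⟨by assumption, by assumption⟩
      have h3 : ({A, B, D} : Finset (Finset ℕ)).card = 3 := by
        rw [Finset.card_insert_of_notMem (by simp [hAB, Ne.symm hDA]),
          Finset.card_insert_of_notMem (by simp [Ne.symm hDB])]
        simp
      have := Finset.card_le_card hsub
      have := hdeg y
      unfold deg at this
      omega
    exact ⟨y, Finset.mem_inter.mpr
      ⟨Finset.mem_insert_of_mem (Finset.mem_sdiff.mpr ⟨hyA, hyB⟩), hyD⟩⟩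
  · have h1 : (A \ B).card = k - (A ∩ B).card := by
      have := Finset.card_inter_add_card_sdiff A B; rw [hFk A hA] at this; omega
    have h2 : (A ∩ B).card ≤ k := by
      have := Finset.card_le_card (Finset.inter_subset_left (s₁ := A) (s₂ := B))
      rw [hFk A hA] at this; exact this
    calc (insert x (A \ B)).card ≤ (A \ B).card + 1 := Finset.card_insert_le _ _
      _ ≤ k - 1 := by omega
end

section
/- Every intersecting 4-family with at most 4 blocks has transversal size at most 2. -/
/-- Every intersecting `4`-family with at most `4` blocks has transversal
size at most `2`. -/
theorem tau_le_two_of_card_le_four (F : Finset (Finset ℕ))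
    (hFk : ∀ B ∈ F, B.card = 4)
    (hFi : IsIntersecting F)
    (hlen : F.card ≤ 4) :
    ∃ C : Finset ℕ, Covers C F ∧ C.card ≤ 2 := by
  classical
  by_cases h0 : F = ∅
  · exact ⟨∅, by simp [Covers, h0], by simp⟩
  obtain ⟨A, hA⟩ := Finset.nonempty_iff_ne_empty.mpr h0
  by_cases h1 : F.erase A = ∅
  · have hAcard := hFk A hA
    obtain ⟨a, ha⟩ : A.Nonempty := Finset.card_pos.mp (by omega)
    refine ⟨{a}, ?_, by simp⟩
    intro B hB
    rcases eq_or_ne B A with rfl | hne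
    · exact ⟨a, Finset.mem_inter.mpr ⟨Finset.mem_singleton_self a, ha⟩⟩
    · exact absurd (Finset.mem_erase.mpr ⟨hne, hB⟩) (by simp [h1])
  obtain ⟨B, hB⟩ := Finset.nonempty_iff_ne_empty.mpr h1
  have hBF : B ∈ F := Finset.mem_of_mem_erase hB
  obtain ⟨x, hx⟩ := hFi A hA B hBF
  have hxA : x ∈ A := (Finset.mem_inter.mp hx).1
  have hxB : x ∈ B := (Finset.mem_inter.mp hx).2
  by_cases h2 : (F.erase A).erase B = ∅
  · refine ⟨{x}, ?_, by simp⟩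
    intro D hD
    rcases eq_or_ne D A with rfl | hne1
    · exact ⟨x, Finset.mem_inter.mpr ⟨Finset.mem_singleton_self x, hxA⟩⟩
    rcases eq_or_ne D B with rfl | hne2
    · exact ⟨x, Finset.mem_inter.mpr ⟨Finset.mem_singleton_self x, hxB⟩⟩
    exact absurd (Finset.mem_erase.mpr ⟨hne2, Finset.mem_erase.mpr ⟨hne1, hD⟩⟩) (by simp [h2])
  obtain ⟨D, hD⟩ := Finset.nonempty_iff_ne_empty.mpr h2
  have hDF : D ∈ F := Finset.mem_of_mem_erase (Finset.mem_of_mem_erase hD)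
  by_cases h3 : ((F.erase A).erase B).erase D = ∅
  · have hDcard := hFk D hDF
    obtain ⟨y, hy⟩ : D.Nonempty := Finset.card_pos.mp (by omega)
    refine ⟨{x, y}, ?_, Finset.card_le_two⟩
    intro E hE
    rcases eq_or_ne E A with rfl | hne1
    · exact ⟨x, Finset.mem_inter.mpr ⟨by simp, hxA⟩⟩
    rcases eq_or_ne E B with rfl | hne2
    · exact ⟨x, Finset.mem_inter.mpr ⟨by simp, hxB⟩⟩
    rcases eq_or_ne E D with rfl | hne3
    · exact ⟨y, Finset.mem_inter.mpr ⟨by simp, hy⟩⟩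
    exact absurd (Finset.mem_erase.mpr ⟨hne3, Finset.mem_erase.mpr ⟨hne2,
      Finset.mem_erase.mpr ⟨hne1, hE⟩⟩⟩) (by simp [h3])
  obtain ⟨E, hEm⟩ := Finset.nonempty_iff_ne_empty.mpr h3
  have hEF : E ∈ F := Finset.mem_of_mem_erase (Finset.mem_of_mem_erase (Finset.mem_of_mem_erase hEm))
  obtain ⟨y, hy⟩ := hFi D hDF E hEF
  have hyD : y ∈ D := (Finset.mem_inter.mp hy).1
  have hyE : y ∈ E := (Finset.mem_inter.mp hy).2
  -- F = {A, B, D, E}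
  have hEne3 : E ≠ D := (Finset.mem_erase.mp hEm).1
  have hEne2 : E ≠ B := (Finset.mem_erase.mp (Finset.mem_of_mem_erase hEm)).1
  have hEne1 : E ≠ A := (Finset.mem_erase.mp (Finset.mem_of_mem_erase (Finset.mem_of_mem_erase hEm))).1
  have hDne2 : D ≠ B := (Finset.mem_erase.mp hD).1
  have hDne1 : D ≠ A := (Finset.mem_erase.mp (Finset.mem_of_mem_erase hD)).1
  have hBne1 : B ≠ A := (Finset.mem_erase.mp hB).1
  have hsub : ({A, B, D, E} : Finset (Finset ℕ)) ⊆ F := by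
    intro S hS
    simp only [Finset.mem_insert, Finset.mem_singleton] at hS
    rcases hS with rfl | rfl | rfl | rfl <;> assumption
  have hcard4 : ({A, B, D, E} : Finset (Finset ℕ)).card = 4 := by
    rw [Finset.card_insert_of_notMem (by simp [hBne1.symm, hDne1.symm, hEne1.symm]),
        Finset.card_insert_of_notMem (by simp [hDne2.symm, hEne2.symm]),
        Finset.card_insert_of_notMem (by simp [hEne3.symm]), Finset.card_singleton]
  have hFeq : F = ({A, B, D, E} : Finset (Finset ℕ)) :=
    (Finset.eq_of_subset_of_card_le hsub (by omega)).symm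
  refine ⟨{x, y}, ?_, Finset.card_le_two⟩
  intro S hS
  rw [hFeq] at hS
  simp only [Finset.mem_insert, Finset.mem_singleton] at hS
  rcases hS with rfl | rfl | rfl | rfl
  · exact ⟨x, Finset.mem_inter.mpr ⟨by simp, hxA⟩⟩
  · exact ⟨x, Finset.mem_inter.mpr ⟨by simp, hxB⟩⟩
  · exact ⟨y, Finset.mem_inter.mpr ⟨by simp, hyD⟩⟩
  · exact ⟨y, Finset.mem_inter.mpr ⟨by simp, hyE⟩⟩
end

section
/- Every intersecting 4-family with exactly 5 blocks and transversal size 3 has all of its vertices of degree exactly 2 and any two of its distinct blocks intersect in exactly one vertex. -/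
/-- Every intersecting `4`-family with exactly `5` blocks and transversal
size `3` has all vertex degrees equal to `2`, and any two distinct blocks meet in
exactly one vertex. -/
theorem five_blocks_tau_three (F : Finset (Finset ℕ))
    (hFk : ∀ B ∈ F, B.card = 4)
    (hFi : IsIntersecting F)
    (hlen : F.card = 5)
    (hFt : HasTransversalSize F 3) :
    (∀ x ∈ vertexSet F, deg F x = 2) ∧
    (∀ A ∈ F, ∀ B ∈ F, A ≠ B → (A ∩ B).card = 1) := by
  classical
  -- Step 1: every vertex has degree at most 2
  have hdeg2 : ∀ x, deg F x ≤ 2 := by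
    intro x
    by_contra hx
    push_neg at hx
    set F' := F.filter (fun B => x ∉ B) with hF'
    have hcards : (F.filter (fun B => x ∈ B)).card + F'.card = 5 := by
      rw [hF', Finset.card_filter_add_card_filter_not, hlen]
    have hdx : deg F x = (F.filter (fun B => x ∈ B)).card := rfl
    have hF'card : F'.card ≤ 2 := by omega
    have hF'sub : ∀ B ∈ F', B ∈ F ∧ x ∉ B := fun B hB => Finset.mem_filter.mp hB
    have key : ∃ C : Finset ℕ, Covers C F ∧ C.card ≤ 2 := by
      rcases F'.eq_empty_or_nonempty with he | ⟨A, hA⟩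
      · refine ⟨{x}, fun B hB => ⟨x, Finset.mem_inter.mpr ⟨Finset.mem_singleton_self x, ?_⟩⟩, by simp⟩
        by_contra hxB
        have : B ∈ F' := Finset.mem_filter.mpr ⟨hB, hxB⟩
        simp [he] at this
      · obtain ⟨y, hy⟩ : ∃ y, ∀ B ∈ F', y ∈ B := by
          rcases (F'.erase A).eq_empty_or_nonempty with he2 | ⟨B, hB⟩
          · have hA4 : A.card = 4 := hFk A (hF'sub A hA).1
            obtain ⟨y, hyA⟩ : A.Nonempty := by rw [← Finset.card_pos, hA4]; norm_num
            refine ⟨y, fun B hB => ?_⟩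
            have hBA : B = A := by
              by_contra hne
              have : B ∈ F'.erase A := Finset.mem_erase.mpr ⟨hne, hB⟩
              simp [he2] at this
            exact hBA ▸ hyA
          · have hBA : B ≠ A := (Finset.mem_erase.mp hB).1
            have hBF' : B ∈ F' := (Finset.mem_erase.mp hB).2
            obtain ⟨y, hy⟩ := hFi A (hF'sub A hA).1 B (hF'sub B hBF').1
            rw [Finset.mem_inter] at hy
            have hsub : ({A, B} : Finset (Finset ℕ)) ⊆ F' := by
              intro D hD
              rcases Finset.mem_insert.mp hD with h | h
              · exact h ▸ hA
              · exact (Finset.mem_singleton.mp h) ▸ hBF'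
            have hcard2 : ({A, B} : Finset (Finset ℕ)).card = 2 := by
              rw [Finset.card_insert_of_notMem (by simp [Ne.symm hBA]), Finset.card_singleton]
            have heq : ({A, B} : Finset (Finset ℕ)) = F' :=
              Finset.eq_of_subset_of_card_le hsub (by omega)
            refine ⟨y, fun D hD => ?_⟩
            rw [← heq] at hD
            rcases Finset.mem_insert.mp hD with h | h
            · exact h ▸ hy.1
            · exact (Finset.mem_singleton.mp h) ▸ hy.2
        refine ⟨{x, y}, fun B hB => ?_, Finset.card_insert_le _ _ |>.trans (by simp)⟩
        by_cases hxB : x ∈ B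
        · exact ⟨x, Finset.mem_inter.mpr ⟨by simp, hxB⟩⟩
        · have : B ∈ F' := Finset.mem_filter.mpr ⟨hB, hxB⟩
          exact ⟨y, Finset.mem_inter.mpr ⟨by simp, hy B this⟩⟩
    obtain ⟨C, hC, hC2⟩ := key
    have := hFt.2 C hC
    omega
  -- notation
  set V := vertexSet F with hV
  have hBV : ∀ B ∈ F, B ⊆ V := fun B hB => Finset.le_sup (f := id) hB
  have hmemV : ∀ x ∈ V, 1 ≤ deg F x := by
    intro x hxV
    rw [hV, vertexSet, Finset.mem_sup] at hxV
    obtain ⟨B, hB, hxB⟩ := hxV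
    have : B ∈ F.filter (fun B => x ∈ B) := Finset.mem_filter.mpr ⟨hB, hxB⟩
    have := Finset.card_pos.mpr ⟨B, this⟩
    exact this
  -- Step 2: sum of degrees is 20
  have hdeg_sum_eq : ∀ x, deg F x = ∑ B ∈ F, (if x ∈ B then 1 else 0) := by
    intro x; rw [deg, Finset.card_filter]
  have S1 : ∑ x ∈ V, deg F x = 20 := by
    calc ∑ x ∈ V, deg F x = ∑ x ∈ V, ∑ B ∈ F, (if x ∈ B then 1 else 0) := by
          exact Finset.sum_congr rfl fun x _ => hdeg_sum_eq x
      _ = ∑ B ∈ F, ∑ x ∈ V, (if x ∈ B then 1 else 0) := Finset.sum_comm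
      _ = ∑ B ∈ F, B.card := by
          refine Finset.sum_congr rfl fun B hB => ?_
          rw [← Finset.card_filter]
          congr 1
          ext y
          simp only [Finset.mem_filter]
          exact ⟨fun h => h.2, fun h => ⟨hBV B hB h, h⟩⟩
      _ = ∑ B ∈ F, 4 := Finset.sum_congr rfl hFk
      _ = 20 := by rw [Finset.sum_const, hlen]; norm_num
  -- Step 3: double counting: ∑_{A,B} |A ∩ B| = ∑_x deg(x)^2
  have hinter : ∀ A ∈ F, ∀ B : Finset ℕ,
      (A ∩ B).card = ∑ x ∈ V, (if x ∈ A then 1 else 0) * (if x ∈ B then 1 else 0) := by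
    intro A hA B
    have h1 : A ∩ B = V.filter (fun x => x ∈ A ∧ x ∈ B) := by
      ext y
      simp only [Finset.mem_inter, Finset.mem_filter]
      exact ⟨fun h => ⟨hBV A hA h.1, h⟩, fun h => h.2⟩
    rw [h1, Finset.card_filter]
    refine Finset.sum_congr rfl fun x _ => ?_
    by_cases h1 : x ∈ A <;> by_cases h2 : x ∈ B <;> simp [h1, h2]
  have S2 : ∑ A ∈ F, ∑ B ∈ F, (A ∩ B).card = ∑ x ∈ V, deg F x * deg F x := by
    calc ∑ A ∈ F, ∑ B ∈ F, (A ∩ B).card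
        = ∑ A ∈ F, ∑ B ∈ F, ∑ x ∈ V, (if x ∈ A then 1 else 0) * (if x ∈ B then 1 else 0) := by
          refine Finset.sum_congr rfl fun A hA => Finset.sum_congr rfl fun B _ => hinter A hA B
      _ = ∑ A ∈ F, ∑ x ∈ V, (if x ∈ A then 1 else 0) * ∑ B ∈ F, (if x ∈ B then 1 else 0) := by
          refine Finset.sum_congr rfl fun A _ => ?_
          rw [Finset.sum_comm]
          exact Finset.sum_congr rfl fun x _ => (Finset.mul_sum _ _ _).symm
      _ = ∑ x ∈ V, (∑ A ∈ F, (if x ∈ A then 1 else 0)) * ∑ B ∈ F, (if x ∈ B then 1 else 0) := by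
          rw [Finset.sum_comm]
          exact Finset.sum_congr rfl fun x _ => (Finset.sum_mul _ _ _).symm
      _ = ∑ x ∈ V, deg F x * deg F x := by
          refine Finset.sum_congr rfl fun x _ => ?_
          rw [← hdeg_sum_eq]
  -- Lower bound structure
  have hrow : ∀ A ∈ F, ∑ B ∈ F, (A ∩ B).card = 4 + ∑ B ∈ F.erase A, (A ∩ B).card := by
    intro A hA
    rw [← Finset.add_sum_erase F _ hA, Finset.inter_self, hFk A hA]
  have hcard_erase : ∀ A ∈ F, (F.erase A).card = 4 := by
    intro A hA
    rw [Finset.card_erase_of_mem hA, hlen]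
  have hpair1 : ∀ A ∈ F, ∀ B ∈ F, 1 ≤ (A ∩ B).card := fun A hA B hB =>
    Finset.card_pos.mpr (hFi A hA B hB)
  have hinner_ge : ∀ A ∈ F, 4 ≤ ∑ B ∈ F.erase A, (A ∩ B).card := by
    intro A hA
    calc (4 : ℕ) = ∑ B ∈ F.erase A, 1 := by rw [Finset.sum_const, hcard_erase A hA]; simp
      _ ≤ ∑ B ∈ F.erase A, (A ∩ B).card :=
          Finset.sum_le_sum fun B hB => hpair1 A hA B (Finset.mem_of_mem_erase hB)
  have hlower : 40 ≤ ∑ A ∈ F, ∑ B ∈ F, (A ∩ B).card := by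
    calc (40 : ℕ) = ∑ _A ∈ F, 8 := by rw [Finset.sum_const, hlen]; norm_num
      _ ≤ ∑ A ∈ F, ∑ B ∈ F, (A ∩ B).card := by
          refine Finset.sum_le_sum fun A hA => ?_
          rw [hrow A hA]
          have := hinner_ge A hA
          omega
  have hupper : ∑ x ∈ V, deg F x * deg F x ≤ ∑ x ∈ V, 2 * deg F x :=
    Finset.sum_le_sum fun x _ => Nat.mul_le_mul_right _ (hdeg2 x)
  have h2sum : ∑ x ∈ V, 2 * deg F x = 40 := by
    rw [← Finset.mul_sum, S1]; norm_num
  have hTeq : ∑ A ∈ F, ∑ B ∈ F, (A ∩ B).card = 40 := by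
    have h1 := hlower
    rw [S2] at h1 ⊢
    omega
  -- degrees: pointwise equality deg² = 2 deg
  have hdeg_eq : ∀ x ∈ V, deg F x * deg F x = 2 * deg F x := by
    have hs : ∑ x ∈ V, deg F x * deg F x = ∑ x ∈ V, 2 * deg F x := by
      rw [h2sum, ← S2, hTeq]
    exact fun x hx => ((Finset.sum_eq_sum_iff_of_le fun i _ =>
      Nat.mul_le_mul_right _ (hdeg2 i)).mp hs) x hx
  constructor
  · intro x hx
    have h1 := hmemV x hx
    have h2 := hdeg2 x
    have h3 := hdeg_eq x hx
    interval_cases h : (deg F x) <;> omega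
  · -- intersections
    have hrows_eq : ∀ A ∈ F, ∑ B ∈ F, (A ∩ B).card = 8 := by
      have hs : ∑ A ∈ F, ∑ B ∈ F, (A ∩ B).card = ∑ _A ∈ F, 8 := by
        rw [hTeq, Finset.sum_const, hlen]; norm_num
      refine fun A hA => ((Finset.sum_eq_sum_iff_of_le fun A' hA' => ?_).mp hs.symm A hA).symm
      rw [hrow A' hA']
      have := hinner_ge A' hA'
      omega
    intro A hA B hB hAB
    have hin : ∑ B' ∈ F.erase A, (A ∩ B').card = 4 := by
      have := hrows_eq A hA
      rw [hrow A hA] at this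
      omega
    have hs : ∑ B' ∈ F.erase A, (1 : ℕ) = ∑ B' ∈ F.erase A, (A ∩ B').card := by
      rw [hin, Finset.sum_const, hcard_erase A hA]; simp
    have := (Finset.sum_eq_sum_iff_of_le fun B' hB' =>
      hpair1 A hA B' (Finset.mem_of_mem_erase hB')).mp hs
    exact (this B (Finset.mem_erase.mpr ⟨hAB.symm, hB⟩)).symm
end

section
/- Every intersecting 4-family of transversal size 4 has at least 9 blocks (i.e., q(4) ≥ 9). -/
lemma inter_sub {F G : Finset (Finset ℕ)} (hi : IsIntersecting F) (h : G ⊆ F) :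
    IsIntersecting G := fun A hA B hB => hi A (h hA) B (h hB)

lemma pair_cover : ∀ n (F : Finset (Finset ℕ)), F.card ≤ n → IsIntersecting F →
    ∃ C, Covers C F ∧ 2 * C.card ≤ F.card + 1 := by
  intro n
  induction n with
  | zero =>
    intro F hF _
    have : F = ∅ := Finset.card_eq_zero.mp (Nat.le_zero.mp hF)
    exact ⟨∅, by simp [this, Covers], by simp⟩
  | succ n ih =>
    intro F hF hi
    rcases Finset.eq_empty_or_nonempty F with rfl | ⟨A, hA⟩
    · exact ⟨∅, by simp [Covers], by simp⟩
    by_cases hB : ∃ B ∈ F, B ≠ A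
    · obtain ⟨B, hBF, hBA⟩ := hB
      obtain ⟨p, hp⟩ := hi A hA B hBF
      simp only [Finset.mem_inter] at hp
      set F' := (F.erase A).erase B with hF'
      have hsub : F' ⊆ F := (Finset.erase_subset _ _).trans (Finset.erase_subset _ _)
      have hBe : B ∈ F.erase A := Finset.mem_erase.mpr ⟨hBA, hBF⟩
      have hcard : F'.card = F.card - 2 := by
        rw [hF', Finset.card_erase_of_mem hBe, Finset.card_erase_of_mem hA]; omega
      have hF1 : 1 ≤ F.card := Finset.card_pos.mpr ⟨A, hA⟩
      have hF2 : 2 ≤ F.card := by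
        have := Finset.card_pos.mpr ⟨B, hBe⟩
        rw [Finset.card_erase_of_mem hA] at this; omega
      obtain ⟨C', hC'cov, hC'card⟩ := ih F' (by omega) (inter_sub hi hsub)
      refine ⟨insert p C', ?_, ?_⟩
      · intro D hD
        by_cases hDA : D = A
        · exact ⟨p, Finset.mem_inter.mpr ⟨Finset.mem_insert_self _ _, hDA ▸ hp.1⟩⟩
        by_cases hDB : D = B
        · exact ⟨p, Finset.mem_inter.mpr ⟨Finset.mem_insert_self _ _, hDB ▸ hp.2⟩⟩
        · have hD' : D ∈ F' := by
            rw [hF']; exact Finset.mem_erase.mpr ⟨hDB, Finset.mem_erase.mpr ⟨hDA, hD⟩⟩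
          obtain ⟨z, hz⟩ := hC'cov D hD'
          simp only [Finset.mem_inter] at hz
          exact ⟨z, Finset.mem_inter.mpr ⟨Finset.mem_insert_of_mem hz.1, hz.2⟩⟩
      · have := Finset.card_insert_le p C'
        omega
    · push_neg at hB
      obtain ⟨p, hp⟩ := hi A hA A hA
      simp only [Finset.mem_inter] at hp
      refine ⟨{p}, ?_, ?_⟩
      · intro D hD
        rw [hB D hD]
        exact ⟨p, Finset.mem_inter.mpr ⟨Finset.mem_singleton_self p, hp.1⟩⟩
      · have := Finset.card_pos.mpr ⟨A, hA⟩
        rw [Finset.card_singleton]; omega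

lemma sum_inter_eq (F : Finset (Finset ℕ)) (B : Finset ℕ) :
    ∑ A ∈ F, (A ∩ B).card = ∑ p ∈ B, deg F p := by
  have h1 : ∀ A : Finset ℕ, (A ∩ B).card = ∑ p ∈ B, if p ∈ A then 1 else 0 := by
    intro A
    rw [← Finset.card_filter]
    congr 1
    ext z; simp [Finset.mem_filter, and_comm]
  have h2 : ∀ p, deg F p = ∑ A ∈ F, if p ∈ A then 1 else 0 := by
    intro p; rw [deg, Finset.card_filter]
  simp only [h1, h2]
  exact Finset.sum_comm

lemma deg_bound {F : Finset (Finset ℕ)} {B0 : Finset ℕ} (hB0 : B0 ∈ F) (h4 : B0.card = 4)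
    (hmeet : ∀ A ∈ F, (A ∩ B0).Nonempty) {d : ℕ} (hd : ∀ p ∈ B0, deg F p ≤ d) :
    F.card + 3 ≤ 4 * d := by
  have hsum := sum_inter_eq F B0
  have hup : ∑ p ∈ B0, deg F p ≤ 4 * d := by
    calc ∑ p ∈ B0, deg F p ≤ ∑ p ∈ B0, d := Finset.sum_le_sum hd
    _ = 4 * d := by rw [Finset.sum_const, h4]; ring
  have hlow : 4 + (F.card - 1) ≤ ∑ A ∈ F, (A ∩ B0).card := by
    rw [← Finset.add_sum_erase F _ hB0]
    have h1 : (B0 ∩ B0).card = 4 := by rw [Finset.inter_self]; exact h4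
    have h2 : (F.erase B0).card ≤ ∑ A ∈ F.erase B0, (A ∩ B0).card := by
      rw [Finset.card_eq_sum_ones]
      refine Finset.sum_le_sum ?_
      intro A hA
      exact Finset.card_pos.mpr (hmeet A (Finset.mem_of_mem_erase hA))
    rw [Finset.card_erase_of_mem hB0] at h2
    omega
  have hF1 : 1 ≤ F.card := Finset.card_pos.mpr ⟨B0, hB0⟩
  omega

lemma all_deg_two {G : Finset (Finset ℕ)} (hG5 : G.card = 5)
    (h4 : ∀ B ∈ G, B.card = 4) (hi : IsIntersecting G)
    (hd : ∀ y, deg G y ≤ 2) : ∀ B ∈ G, ∀ p ∈ B, deg G p = 2 := by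
  intro B hB p hp
  by_contra hne
  have hplt : deg G p < 2 := lt_of_le_of_ne (hd p) hne
  have hsum := sum_inter_eq G B
  have hlow : 4 + (G.card - 1) ≤ ∑ A ∈ G, (A ∩ B).card := by
    rw [← Finset.add_sum_erase G _ hB]
    have h1 : (B ∩ B).card = 4 := by rw [Finset.inter_self]; exact h4 B hB
    have h2 : (G.erase B).card ≤ ∑ A ∈ G.erase B, (A ∩ B).card := by
      rw [Finset.card_eq_sum_ones]
      refine Finset.sum_le_sum ?_
      intro A hA
      exact Finset.card_pos.mpr (hi A (Finset.mem_of_mem_erase hA) B hB)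
    rw [Finset.card_erase_of_mem hB] at h2
    omega
  have hup : ∑ q ∈ B, deg G q < ∑ q ∈ B, 2 :=
    Finset.sum_lt_sum (fun q _ => hd q) ⟨p, hp, hplt⟩
  rw [Finset.sum_const, h4 B hB, smul_eq_mul] at hup
  omega

lemma union_small {S1 S2 S3 : Finset (Finset ℕ)} (h1 : S1.card ≤ 2) (h2 : S2.card ≤ 2)
    (h3 : S3.card ≤ 2)
    (h12 : S1.Nonempty → S2.Nonempty → ¬ Disjoint S1 S2)
    (h13 : S1.Nonempty → S3.Nonempty → ¬ Disjoint S1 S3) :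
    (S1 ∪ S2 ∪ S3).card ≤ 4 := by
  rcases S1.eq_empty_or_nonempty with rfl | hn1
  · simp only [Finset.empty_union]
    calc (S2 ∪ S3).card ≤ S2.card + S3.card := Finset.card_union_le _ _
    _ ≤ 4 := by omega
  rcases S2.eq_empty_or_nonempty with rfl | hn2
  · simp only [Finset.union_empty]
    calc (S1 ∪ S3).card ≤ S1.card + S3.card := Finset.card_union_le _ _
    _ ≤ 4 := by omega
  rcases S3.eq_empty_or_nonempty with rfl | hn3
  · simp only [Finset.union_empty]
    calc (S1 ∪ S2).card ≤ S1.card + S2.card := Finset.card_union_le _ _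
    _ ≤ 4 := by omega
  have k12 : (S1 ∩ S2).Nonempty := Finset.not_disjoint_iff_nonempty_inter.mp (h12 hn1 hn2)
  have k13 : (S1 ∩ S3).Nonempty := Finset.not_disjoint_iff_nonempty_inter.mp (h13 hn1 hn3)
  have e1 : (S1 ∪ S2).card + (S1 ∩ S2).card = S1.card + S2.card :=
    Finset.card_union_add_card_inter _ _
  have e2 : ((S1 ∪ S2) ∪ S3).card + ((S1 ∪ S2) ∩ S3).card = (S1 ∪ S2).card + S3.card :=
    Finset.card_union_add_card_inter _ _
  have k13' : ((S1 ∪ S2) ∩ S3).Nonempty := by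
    obtain ⟨z, hz⟩ := k13
    simp only [Finset.mem_inter] at hz
    exact ⟨z, by simp [Finset.mem_inter, Finset.mem_union, hz.1, hz.2]⟩
  have c12 := Finset.card_pos.mpr k12
  have c13 := Finset.card_pos.mpr k13'
  omega

lemma exists_small_cover (F : Finset (Finset ℕ)) (h4 : ∀ B ∈ F, B.card = 4)
    (hi : IsIntersecting F) (hm : F.card ≤ 8) :
    ∃ C, Covers C F ∧ C.card ≤ 3 := by
  by_cases h6 : F.card ≤ 6
  · obtain ⟨C, hC, hCc⟩ := pair_cover F.card F le_rfl hi
    exact ⟨C, hC, by omega⟩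
  push_neg at h6
  have hFne : F.Nonempty := Finset.card_pos.mp (by omega)
  obtain ⟨B0, hB0⟩ := hFne
  -- find x with degree ≥ 3
  have hx : ∃ x ∈ B0, 3 ≤ deg F x := by
    by_contra hno
    push_neg at hno
    have := deg_bound hB0 (h4 B0 hB0) (fun A hA => hi A hA B0 hB0)
      (d := 2) (fun p hp => by have := hno p hp; omega)
    omega
  obtain ⟨x, _, hxdeg⟩ := hx
  set G := F.filter (fun B => x ∉ B) with hGdef
  have hGF : G ⊆ F := Finset.filter_subset _ _
  have hGi : IsIntersecting G := inter_sub hi hGF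
  have hGcard : deg F x + G.card = F.card := by
    rw [deg, hGdef]
    exact Finset.card_filter_add_card_filter_not _
  by_cases hle : G.card ≤ 4
  · obtain ⟨C, hC, hCc⟩ := pair_cover G.card G le_rfl hGi
    refine ⟨insert x C, ?_, ?_⟩
    · intro B hB
      by_cases hxB : x ∈ B
      · exact ⟨x, Finset.mem_inter.mpr ⟨Finset.mem_insert_self _ _, hxB⟩⟩
      · obtain ⟨z, hz⟩ := hC B (Finset.mem_filter.mpr ⟨hB, hxB⟩)
        simp only [Finset.mem_inter] at hz
        exact ⟨z, Finset.mem_inter.mpr ⟨Finset.mem_insert_of_mem hz.1, hz.2⟩⟩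
    · have := Finset.card_insert_le x C; omega
  have hG5 : G.card = 5 := by omega
  by_cases hy : ∃ y ∈ G.sup id, 3 ≤ deg G y
  · obtain ⟨y, _, hydeg⟩ := hy
    set H := G.filter (fun B => y ∉ B) with hHdef
    have hHcard : deg G y + H.card = G.card := by
      rw [deg, hHdef]
      exact Finset.card_filter_add_card_filter_not _
    obtain ⟨C, hC, hCc⟩ := pair_cover H.card H le_rfl (inter_sub hGi (Finset.filter_subset _ _))
    refine ⟨insert x (insert y C), ?_, ?_⟩
    · intro B hB
      by_cases hxB : x ∈ B
      · exact ⟨x, Finset.mem_inter.mpr ⟨Finset.mem_insert_self _ _, hxB⟩⟩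
      have hBG : B ∈ G := Finset.mem_filter.mpr ⟨hB, hxB⟩
      by_cases hyB : y ∈ B
      · exact ⟨y, Finset.mem_inter.mpr
          ⟨Finset.mem_insert_of_mem (Finset.mem_insert_self _ _), hyB⟩⟩
      · obtain ⟨z, hz⟩ := hC B (Finset.mem_filter.mpr ⟨hBG, hyB⟩)
        simp only [Finset.mem_inter] at hz
        exact ⟨z, Finset.mem_inter.mpr
          ⟨Finset.mem_insert_of_mem (Finset.mem_insert_of_mem hz.1), hz.2⟩⟩
    · have i1 := Finset.card_insert_le x (insert y C)
      have i2 := Finset.card_insert_le y C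
      omega
  -- hard case
  push_neg at hy
  have hdeg2 : ∀ z, deg G z ≤ 2 := by
    intro z
    by_cases hz : z ∈ G.sup id
    · have := hy z hz; omega
    · have : deg G z = 0 := by
        rw [deg, Finset.card_eq_zero, Finset.filter_eq_empty_iff]
        intro B hB hzB
        exact hz (Finset.mem_sup.mpr ⟨B, hB, hzB⟩)
      omega
  have hstruct := all_deg_two hG5 (fun B hB => h4 B (hGF hB)) hGi hdeg2
  have hdegx3 : deg F x = 3 := by omega
  have hFx : (F.filter (fun B => x ∈ B)).card = 3 := hdegx3
  obtain ⟨X1, X2, X3, hne12, hne13, hne23, hFxeq⟩ := Finset.card_eq_three.mp hFx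
  have hmemX : ∀ X, X ∈ F.filter (fun B => x ∈ B) ↔ (X ∈ F ∧ x ∈ X) := by
    intro X; simp [Finset.mem_filter]
  have hX1 : X1 ∈ F ∧ x ∈ X1 := (hmemX X1).mp (by rw [hFxeq]; simp)
  have hX2 : X2 ∈ F ∧ x ∈ X2 := (hmemX X2).mp (by rw [hFxeq]; simp)
  have hX3 : X3 ∈ F ∧ x ∈ X3 := (hmemX X3).mp (by rw [hFxeq]; simp)
  have hpart : ∀ B ∈ F, x ∈ B → B = X1 ∨ B = X2 ∨ B = X3 := by
    intro B hB hxB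
    have : B ∈ F.filter (fun B => x ∈ B) := (hmemX B).mpr ⟨hB, hxB⟩
    rw [hFxeq] at this
    simpa using this
  set S : ℕ → Finset (Finset ℕ) := fun z => G.filter (fun A => z ∈ A) with hSdef
  have hScard : ∀ z, (S z).card = deg G z := fun z => rfl
  have hSsub : ∀ z, S z ⊆ G := fun z => Finset.filter_subset _ _
  have hmemS : ∀ z B, B ∈ S z ↔ (B ∈ G ∧ z ∈ B) := by
    intro z B; rw [hSdef]; simp [Finset.mem_filter]
  have hS2 : ∀ z, (S z).Nonempty → (S z).card = 2 := by
    intro z hz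
    obtain ⟨B, hB⟩ := hz
    rw [hmemS] at hB
    rw [hScard]
    exact hstruct B hB.1 z hB.2
  -- each X covers G through its non-x points
  have hcovX : ∀ X, X ∈ F → x ∈ X → ∀ B ∈ G, ∃ z ∈ X.erase x, B ∈ S z := by
    intro X hXF hxX B hBG
    obtain ⟨z, hz⟩ := hi X hXF B (hGF hBG)
    simp only [Finset.mem_inter] at hz
    have hzx : z ≠ x := by
      intro h; subst h
      exact (Finset.mem_filter.mp hBG).2 hz.2
    exact ⟨z, Finset.mem_erase.mpr ⟨hzx, hz.1⟩, (hmemS z B).mpr ⟨hBG, hz.2⟩⟩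
  -- final cover construction
  have key : ∀ u v, u ∈ X1 → v ∈ X2 → (S u).card = 2 → (S v).card = 2 →
      Disjoint (S u) (S v) → ∃ C, Covers C F ∧ C.card ≤ 3 := by
    intro u v huX hvX hSu hSv hduv
    have hunion : (S u ∪ S v).card = 4 := by
      rw [Finset.card_union_of_disjoint hduv, hSu, hSv]
    set L := G \ (S u ∪ S v) with hLdef
    have hLcard : L.card = 1 := by
      rw [hLdef, Finset.card_sdiff_of_subset (Finset.union_subset (hSsub u) (hSsub v))]
      omega
    obtain ⟨Bl, hBleq⟩ := Finset.card_eq_one.mp hLcard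
    have hBlG : Bl ∈ G := by
      have : Bl ∈ L := by rw [hBleq]; simp
      exact (Finset.mem_sdiff.mp this).1
    obtain ⟨w, hw⟩ := hi X3 hX3.1 Bl (hGF hBlG)
    simp only [Finset.mem_inter] at hw
    refine ⟨{u, v, w}, ?_, ?_⟩
    · intro B hB
      by_cases hxB : x ∈ B
      · rcases hpart B hB hxB with rfl | rfl | rfl
        · exact ⟨u, Finset.mem_inter.mpr ⟨by simp, huX⟩⟩
        · exact ⟨v, Finset.mem_inter.mpr ⟨by simp, hvX⟩⟩
        · exact ⟨w, Finset.mem_inter.mpr ⟨by simp, hw.1⟩⟩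
      have hBG : B ∈ G := Finset.mem_filter.mpr ⟨hB, hxB⟩
      by_cases hBu : B ∈ S u
      · exact ⟨u, Finset.mem_inter.mpr ⟨by simp, ((hmemS u B).mp hBu).2⟩⟩
      by_cases hBv : B ∈ S v
      · exact ⟨v, Finset.mem_inter.mpr ⟨by simp, ((hmemS v B).mp hBv).2⟩⟩
      · have hBL : B ∈ L := by
          rw [hLdef]
          exact Finset.mem_sdiff.mpr ⟨hBG, by simp [Finset.mem_union, hBu, hBv]⟩
        rw [hBleq] at hBL
        have : B = Bl := by simpa using hBL
        subst this
        exact ⟨w, Finset.mem_inter.mpr ⟨by simp, hw.2⟩⟩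
    · have i1 := Finset.card_insert_le u ({v, w} : Finset ℕ)
      have i2 := Finset.card_insert_le v ({w} : Finset ℕ)
      have i3 : ({w} : Finset ℕ).card = 1 := Finset.card_singleton w
      calc ({u, v, w} : Finset ℕ).card ≤ _ := i1
      _ ≤ 3 := by omega
  -- find disjoint pair in X1
  have hA1card : (X1.erase x).card = 3 := by
    rw [Finset.card_erase_of_mem hX1.2, h4 X1 hX1.1]
  obtain ⟨p1, p2, p3, hq12, hq13, hq23, hA1eq⟩ := Finset.card_eq_three.mp hA1card
  have hGsub : G ⊆ S p1 ∪ S p2 ∪ S p3 := by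
    intro B hB
    obtain ⟨z, hzmem, hzS⟩ := hcovX X1 hX1.1 hX1.2 B hB
    rw [hA1eq] at hzmem
    simp only [Finset.mem_insert, Finset.mem_singleton] at hzmem
    rcases hzmem with rfl | rfl | rfl
    · exact Finset.mem_union_left _ (Finset.mem_union_left _ hzS)
    · exact Finset.mem_union_left _ (Finset.mem_union_right _ hzS)
    · exact Finset.mem_union_right _ hzS
  have hpair : ∃ u w, u ∈ X1.erase x ∧ w ∈ X1.erase x ∧ (S u).Nonempty ∧ (S w).Nonempty ∧
      Disjoint (S u) (S w) := by
    by_contra hno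
    push_neg at hno
    have hm1 : p1 ∈ X1.erase x := by rw [hA1eq]; simp
    have hm2 : p2 ∈ X1.erase x := by rw [hA1eq]; simp
    have hm3 : p3 ∈ X1.erase x := by rw [hA1eq]; simp
    have hb : ∀ z, (S z).card ≤ 2 := by intro z; rw [hScard]; exact hdeg2 z
    have := union_small (hb p1) (hb p2) (hb p3)
      (fun h1 h2 => hno p1 p2 hm1 hm2 h1 h2)
      (fun h1 h3 => hno p1 p3 hm1 hm3 h1 h3)
    have hle5 : G.card ≤ (S p1 ∪ S p2 ∪ S p3).card := Finset.card_le_card hGsub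
    omega
  obtain ⟨p, q, hpX, hqX, hSnp, hSnq, hdpq⟩ := hpair
  have hpX1 : p ∈ X1 := Finset.mem_of_mem_erase hpX
  have hqX1 : q ∈ X1 := Finset.mem_of_mem_erase hqX
  have hSp2 := hS2 p hSnp
  have hSq2 := hS2 q hSnq
  -- the missing block Bm
  have hMcard : (G \ (S p ∪ S q)).card = 1 := by
    rw [Finset.card_sdiff_of_subset (Finset.union_subset (hSsub p) (hSsub q)),
      Finset.card_union_of_disjoint hdpq]
    omega
  obtain ⟨Bm, hBmeq⟩ := Finset.card_eq_one.mp hMcard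
  have hBmmem : Bm ∈ G \ (S p ∪ S q) := by rw [hBmeq]; simp
  have hBmG : Bm ∈ G := (Finset.mem_sdiff.mp hBmmem).1
  have hBmnotin : Bm ∉ S p ∪ S q := (Finset.mem_sdiff.mp hBmmem).2
  obtain ⟨v, hv⟩ := hi X2 hX2.1 Bm (hGF hBmG)
  simp only [Finset.mem_inter] at hv
  have hBmSv : Bm ∈ S v := (hmemS v Bm).mpr ⟨hBmG, hv.2⟩
  have hSv2 : (S v).card = 2 := hS2 v ⟨Bm, hBmSv⟩
  have hvdisj : Disjoint (S v) (S p) ∨ Disjoint (S v) (S q) := by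
    by_contra hcon
    push_neg at hcon
    obtain ⟨z1, hz1⟩ := Finset.not_disjoint_iff_nonempty_inter.mp hcon.1
    obtain ⟨z2, hz2⟩ := Finset.not_disjoint_iff_nonempty_inter.mp hcon.2
    simp only [Finset.mem_inter] at hz1 hz2
    have hz1Bm : z1 ≠ Bm := by
      intro h; subst h
      exact hBmnotin (Finset.mem_union_left _ hz1.2)
    have hz2Bm : z2 ≠ Bm := by
      intro h; subst h
      exact hBmnotin (Finset.mem_union_right _ hz2.2)
    have hz12 : z1 ≠ z2 := by
      intro h; subst h
      exact (Finset.disjoint_left.mp hdpq hz1.2) hz2.2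
    have hsub3 : ({Bm, z1, z2} : Finset (Finset ℕ)) ⊆ S v := by
      intro z hz
      simp only [Finset.mem_insert, Finset.mem_singleton] at hz
      rcases hz with rfl | rfl | rfl
      exacts [hBmSv, hz1.1, hz2.1]
    have h3 : ({Bm, z1, z2} : Finset (Finset ℕ)).card = 3 :=
      Finset.card_eq_three.mpr ⟨Bm, z1, z2, fun h => hz1Bm h.symm, fun h => hz2Bm h.symm, hz12, rfl⟩
    have := Finset.card_le_card hsub3
    omega
  rcases hvdisj with hd | hd
  · exact key p v hpX1 hv.1 hSp2 hSv2 hd.symm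
  · exact key q v hqX1 hv.1 hSq2 hSv2 hd.symm

/-- Every intersecting `4`-family of transversal size `4` has at least
`9` blocks, i.e. `q(4) ≥ 9`. -/
theorem q_four_ge_nine (F : Finset (Finset ℕ))
    (hFk : ∀ B ∈ F, B.card = 4)
    (hFi : IsIntersecting F)
    (hFt : HasTransversalSize F 4) :
    9 ≤ F.card := by
  by_contra h
  push_neg at h
  obtain ⟨C, hCcov, hCcard⟩ := exists_small_cover F hFk hFi (by omega)
  have := hFt.2 C hCcov
  omega
end

section
/- Every intersecting 3-family of transversal size 3 has at least 6 blocks (i.e., q(3) ≥ 6). -/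
/-- Every intersecting `3`-family of transversal size `3` has at least
`6` blocks, i.e. `q(3) ≥ 6`. -/
theorem q_three_ge_six (F : Finset (Finset ℕ))
    (hFk : ∀ B ∈ F, B.card = 3)
    (hFi : IsIntersecting F)
    (hFt : HasTransversalSize F 3) :
    6 ≤ F.card := by
  by_contra h
  push_neg at h
  -- F is nonempty
  have hne : F.Nonempty := by
    rcases Finset.eq_empty_or_nonempty F with rfl | hne
    · have := hFt.2 ∅ (by intro B hB; exact absurd hB (by simp))
      simp at this
    · exact hne
  obtain ⟨B, hB⟩ := hne
  have hB3 := hFk B hB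
  have hcard1 : 1 ≤ F.card := Finset.card_pos.mpr ⟨B, hB⟩
  -- sum of degrees of vertices of B is at least F.card + 2
  have hsum : F.card + 2 ≤ ∑ x ∈ B, deg F x := by
    have h1 : ∑ x ∈ B, deg F x = ∑ A ∈ F, (B ∩ A).card := by
      simp only [deg, Finset.card_filter]
      rw [Finset.sum_comm]
      refine Finset.sum_congr rfl fun A _ => ?_
      rw [← Finset.card_filter, Finset.filter_mem_eq_inter]
    rw [h1, ← Finset.add_sum_erase F _ hB]
    have h2 : (B ∩ B).card = 3 := by rw [Finset.inter_self]; exact hB3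
    have h3 : (F.erase B).card • 1 ≤ ∑ A ∈ F.erase B, (B ∩ A).card := by
      apply Finset.card_nsmul_le_sum
      intro A hA
      have hAF : A ∈ F := Finset.mem_of_mem_erase hA
      exact Nat.one_le_iff_ne_zero.mpr (Finset.card_ne_zero_of_mem
        (hFi B hB A hAF).choose_spec)
    have h4 : (F.erase B).card = F.card - 1 := Finset.card_erase_of_mem hB
    simp only [smul_eq_mul, mul_one] at h3
    omega
  -- pick x of maximal degree in B
  have hBne : B.Nonempty := Finset.card_pos.mp (by omega)
  obtain ⟨x, hxB, hxmax⟩ := Finset.exists_max_image B (deg F) hBne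
  have hsum2 : ∑ y ∈ B, deg F y ≤ B.card • deg F x :=
    Finset.sum_le_card_nsmul B (deg F) (deg F x) (fun y hy => hxmax y hy)
  rw [hB3, smul_eq_mul] at hsum2
  -- blocks avoiding x
  set S := F.filter (fun A => x ∉ A) with hSdef
  have hsplit : deg F x + S.card = F.card := by
    have := Finset.card_filter_add_card_filter_not (s := F)
      (p := fun A => x ∈ A)
    simpa [deg, hSdef] using this
  have hS2 : S.card ≤ 2 := by omega
  -- build a small cover
  have key : ∃ C : Finset ℕ, Covers C F ∧ C.card ≤ 2 := by
    rcases Finset.eq_empty_or_nonempty S with hSe | hSne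
    · refine ⟨{x}, ?_, by simp⟩
      intro A hA
      have hxA : x ∈ A := by
        by_contra hx
        have : A ∈ S := Finset.mem_filter.mpr ⟨hA, hx⟩
        rw [hSe] at this; exact absurd this (by simp)
      exact ⟨x, by simp [hxA]⟩
    · have hy : ∃ y, ∀ A ∈ S, y ∈ A := by
        have h1 : 1 ≤ S.card := Finset.card_pos.mpr hSne
        interval_cases hc : S.card
        · obtain ⟨A, hA⟩ := Finset.card_eq_one.mp hc
          have hAS : A ∈ S := by rw [hA]; simp
          have hAF : A ∈ F := (Finset.mem_filter.mp hAS).1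
          obtain ⟨y, hyA⟩ := Finset.card_pos.mp (by rw [hFk A hAF]; norm_num)
          exact ⟨y, fun A' hA' => by rw [hA] at hA'; simp at hA'; rwa [hA']⟩
        · obtain ⟨A1, A2, hne12, hA⟩ := Finset.card_eq_two.mp hc
          have hA1 : A1 ∈ F := (Finset.mem_filter.mp (by rw [hA]; simp : A1 ∈ S)).1
          have hA2 : A2 ∈ F := (Finset.mem_filter.mp (by rw [hA]; simp : A2 ∈ S)).1
          obtain ⟨y, hy⟩ := hFi A1 hA1 A2 hA2
          simp only [Finset.mem_inter] at hy
          refine ⟨y, fun A' hA' => ?_⟩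
          rw [hA] at hA'
          rcases Finset.mem_insert.mp hA' with rfl | hA'
          · exact hy.1
          · simp at hA'; rw [hA']; exact hy.2
      obtain ⟨y, hy⟩ := hy
      refine ⟨{x, y}, ?_, (Finset.card_insert_le _ _).trans (by simp)⟩
      intro A hA
      by_cases hxA : x ∈ A
      · exact ⟨x, by simp [hxA]⟩
      · have hAS : A ∈ S := Finset.mem_filter.mpr ⟨hA, hxA⟩
        exact ⟨y, by simp [hy A hAS]⟩
  obtain ⟨C, hC, hCc⟩ := key
  have := hFt.2 C hC
  omega
end

section
/- For every even integer n ≥ 2, there exist n−1 partitions of the set {1, 2, ..., n} into n/2 pairs such that no pair of elements occurs in two different partitions (equivalently, the complete graph on n vertices admits n−1 pairwise edge-disjoint perfect matchings). -/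
/-- Partner of `a` in round `i` of the round-robin 1-factorization of `K_{m+1}`
(vertices `1, …, m+1`, `m` odd, rounds `i < m`). -/
def rrPartner (m i a : ℕ) : ℕ :=
  if a = m + 1 then i + 1
  else if a = i + 1 then m + 1
  else (2 * i + m - (a - 1)) % m + 1

section rr

variable {m i a : ℕ}

lemma rr_cast_eq {x y : ℕ} (hm : 0 < m) (hx : x < m) (hy : y < m)
    (h : (x : ZMod m) = (y : ZMod m)) : x = y := by
  haveI : NeZero m := ⟨by omega⟩
  have := congrArg ZMod.val h
  rwa [ZMod.val_cast_of_lt hx, ZMod.val_cast_of_lt hy] at this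

lemma rr_two_cancel (hm : Odd m) {x y : ZMod m} (h : 2 * x = 2 * y) : x = y := by
  have hc : Nat.Coprime 2 m := Nat.coprime_two_left.mpr hm
  have hu : IsUnit ((2 : ℕ) : ZMod m) := (ZMod.isUnit_iff_coprime 2 m).mpr hc
  have h2 : ((2 : ℕ) : ZMod m) = (2 : ZMod m) := by push_cast; rfl
  rw [h2] at hu
  exact hu.mul_left_cancel h

lemma rr_third_cast (hm : 0 < m) (ha1 : 1 ≤ a) (ham : a - 1 < m) :
    (((2 * i + m - (a - 1)) % m : ℕ) : ZMod m) = 2 * (i : ZMod m) - ((a - 1 : ℕ) : ZMod m) := by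
  have hle : a - 1 ≤ 2 * i + m := by omega
  rw [ZMod.natCast_mod, Nat.cast_sub hle]
  push_cast
  rw [ZMod.natCast_self]
  ring

lemma rr_mem (hm : 0 < m) (hi : i < m) (ha : a ∈ Finset.Icc 1 (m + 1)) :
    rrPartner m i a ∈ Finset.Icc 1 (m + 1) := by
  simp only [Finset.mem_Icc] at ha ⊢
  unfold rrPartner
  split_ifs with h1 h2
  · omega
  · omega
  · have := Nat.mod_lt (2 * i + m - (a - 1)) hm
    omega

lemma rr_ne (hm : Odd m) (hm0 : 0 < m) (hi : i < m) (ha : a ∈ Finset.Icc 1 (m + 1)) :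
    rrPartner m i a ≠ a := by
  simp only [Finset.mem_Icc] at ha
  unfold rrPartner
  split_ifs with h1 h2
  · omega
  · omega
  · intro hc
    have hlt : (2 * i + m - (a - 1)) % m < m := Nat.mod_lt _ hm0
    have ha1 : a - 1 < m := by omega
    have hval : (2 * i + m - (a - 1)) % m = a - 1 := by omega
    have hcast : (((2 * i + m - (a - 1)) % m : ℕ) : ZMod m)
        = ((a - 1 : ℕ) : ZMod m) := by rw [hval]
    rw [rr_third_cast hm0 (by omega) ha1] at hcast
    have h2i : 2 * (i : ZMod m) = 2 * ((a - 1 : ℕ) : ZMod m) := by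
      linear_combination hcast
    have := rr_two_cancel hm h2i
    have := rr_cast_eq hm0 hi ha1 this
    omega

lemma rr_invol (hm : Odd m) (hm0 : 0 < m) (hi : i < m)
    (ha : a ∈ Finset.Icc 1 (m + 1)) :
    rrPartner m i (rrPartner m i a) = a := by
  simp only [Finset.mem_Icc] at ha
  by_cases h1 : a = m + 1
  · have e1 : rrPartner m i a = i + 1 := by unfold rrPartner; rw [if_pos h1]
    have e2 : rrPartner m i (i + 1) = m + 1 := by
      unfold rrPartner; rw [if_neg (by omega : ¬ i + 1 = m + 1), if_pos rfl]
    rw [e1, e2, h1]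
  · by_cases h2 : a = i + 1
    · have e1 : rrPartner m i a = m + 1 := by unfold rrPartner; rw [if_neg h1, if_pos h2]
      have e2 : rrPartner m i (m + 1) = i + 1 := by unfold rrPartner; rw [if_pos rfl]
      rw [e1, e2, h2]
    · have e1 : rrPartner m i a = (2 * i + m - (a - 1)) % m + 1 := by
        unfold rrPartner; rw [if_neg h1, if_neg h2]
      set w := (2 * i + m - (a - 1)) % m with hw
      have hwlt : w < m := Nat.mod_lt _ hm0
      have ha1 : a - 1 < m := by omega
      have hwcast : ((w : ℕ) : ZMod m) = 2 * (i : ZMod m) - ((a - 1 : ℕ) : ZMod m) :=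
        rr_third_cast hm0 (by omega) ha1
      have hwne : ¬ w + 1 = m + 1 := by omega
      have hwni : ¬ w + 1 = i + 1 := by
        intro hc
        have hwi : w = i := by omega
        rw [hwi] at hwcast
        have h2i : 2 * ((a - 1 : ℕ) : ZMod m) = 2 * (i : ZMod m) := by
          linear_combination 2 * hwcast
        have := rr_two_cancel hm h2i
        have := rr_cast_eq hm0 ha1 hi this
        omega
      have e2 : rrPartner m i (w + 1) = (2 * i + m - (w + 1 - 1)) % m + 1 := by
        unfold rrPartner; rw [if_neg hwne, if_neg hwni]
      rw [e1, e2]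
      have hlt2 : (2 * i + m - (w + 1 - 1)) % m < m := Nat.mod_lt _ hm0
      have hcast2 : (((2 * i + m - (w + 1 - 1)) % m : ℕ) : ZMod m)
          = ((a - 1 : ℕ) : ZMod m) := by
        rw [rr_third_cast hm0 (by omega) (by omega)]
        simp only [Nat.add_sub_cancel]
        rw [hwcast]
        ring
      have := rr_cast_eq hm0 hlt2 ha1 hcast2
      omega

lemma rr_sum (hm0 : 0 < m) (hi : i < m) (ha : a ∈ Finset.Icc 1 (m + 1))
    (han : a ≠ m + 1) (hai : a ≠ i + 1) :
    ((a - 1 : ℕ) : ZMod m) + ((rrPartner m i a - 1 : ℕ) : ZMod m) = 2 * (i : ZMod m) := by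
  simp only [Finset.mem_Icc] at ha
  unfold rrPartner
  rw [if_neg han, if_neg hai]
  simp only [Nat.add_sub_cancel]
  rw [rr_third_cast hm0 (by omega) (by omega)]
  ring

lemma rr_partner_ne_top (hi : i < m) (ha : a ∈ Finset.Icc 1 (m + 1))
    (han : a ≠ m + 1) (hai : a ≠ i + 1) (hm0 : 0 < m) :
    rrPartner m i a ≠ m + 1 := by
  simp only [Finset.mem_Icc] at ha
  unfold rrPartner
  rw [if_neg han, if_neg hai]
  have := Nat.mod_lt (2 * i + m - (a - 1)) hm0
  omega

end rr

/-- For every even `n ≥ 2` there exist `n - 1` partitions of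
`{1, …, n}` into `n/2` pairs, no two of which share a common pair (i.e. the complete
graph `K_n` has `n - 1` pairwise edge-disjoint perfect matchings). -/
theorem edge_disjoint_perfect_matchings (n : ℕ) (hn : 2 ≤ n) (hev : Even n) :
    ∃ P : Fin (n - 1) → Finset (Finset ℕ),
      (∀ i, (∀ p ∈ P i, p.card = 2) ∧
            (∀ p ∈ P i, ∀ q ∈ P i, p ≠ q → Disjoint p q) ∧
            (P i).biUnion id = Finset.Icc 1 n ∧
            (P i).card = n / 2) ∧
      (∀ i j, i ≠ j → Disjoint (P i) (P j)) := by
  set m := n - 1 with hm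
  have hn1 : n = m + 1 := by omega
  have hm0 : 0 < m := by omega
  have hodd : Odd m := by
    rcases hev with ⟨k, hk⟩
    exact ⟨k - 1, by omega⟩
  refine ⟨fun i => (Finset.Icc 1 n).image (fun a => ({a, rrPartner m i.val a} : Finset ℕ)), ?_, ?_⟩
  · intro i
    have hi : i.val < m := i.isLt
    -- key: for c in a pair, the pair is {c, partner c}
    have key : ∀ a ∈ Finset.Icc 1 n, ∀ c ∈ ({a, rrPartner m i.val a} : Finset ℕ),
        c ∈ Finset.Icc 1 n ∧ ({a, rrPartner m i.val a} : Finset ℕ) = {c, rrPartner m i.val c} := by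
      intro a ha c hc
      rw [hn1] at ha ⊢
      rcases Finset.mem_insert.mp hc with rfl | hc
      · exact ⟨by rw [← hn1] at ha ⊢; exact ha, rfl⟩
      · rw [Finset.mem_singleton] at hc
        subst hc
        refine ⟨rr_mem hm0 hi ha, ?_⟩
        rw [rr_invol hodd hm0 hi ha, Finset.pair_comm]
    have hcard2 : ∀ p ∈ (Finset.Icc 1 n).image (fun a => ({a, rrPartner m i.val a} : Finset ℕ)),
        p.card = 2 := by
      intro p hp
      rcases Finset.mem_image.mp hp with ⟨a, ha, rfl⟩
      rw [Finset.card_pair]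
      rw [hn1] at ha
      exact (rr_ne hodd hm0 hi ha).symm
    have hdisj : ∀ p ∈ (Finset.Icc 1 n).image (fun a => ({a, rrPartner m i.val a} : Finset ℕ)),
        ∀ q ∈ (Finset.Icc 1 n).image (fun a => ({a, rrPartner m i.val a} : Finset ℕ)),
        p ≠ q → Disjoint p q := by
      intro p hp q hq hpq
      rcases Finset.mem_image.mp hp with ⟨a, ha, rfl⟩
      rcases Finset.mem_image.mp hq with ⟨b, hb, rfl⟩
      by_contra hnd
      rcases Finset.not_disjoint_iff.mp hnd with ⟨c, hcp, hcq⟩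
      have h1 := (key a ha c hcp).2
      have h2 := (key b hb c hcq).2
      exact hpq (h1.trans h2.symm)
    have hunion : ((Finset.Icc 1 n).image
        (fun a => ({a, rrPartner m i.val a} : Finset ℕ))).biUnion id = Finset.Icc 1 n := by
      apply Finset.Subset.antisymm
      · intro c hc
        rcases Finset.mem_biUnion.mp hc with ⟨p, hp, hcp⟩
        rcases Finset.mem_image.mp hp with ⟨a, ha, rfl⟩
        exact (key a ha c hcp).1
      · intro a ha
        exact Finset.mem_biUnion.mpr ⟨{a, rrPartner m i.val a},
          Finset.mem_image.mpr ⟨a, ha, rfl⟩, Finset.mem_insert_self _ _⟩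
    refine ⟨hcard2, hdisj, hunion, ?_⟩
    have hcb := Finset.card_biUnion (t := id) hdisj
    rw [hunion] at hcb
    simp only [id_eq] at hcb
    rw [Finset.sum_congr rfl hcard2, Finset.sum_const, smul_eq_mul] at hcb
    rw [Nat.card_Icc] at hcb
    show ((Finset.Icc 1 n).image (fun a => ({a, rrPartner m i.val a} : Finset ℕ))).card = n / 2
    omega
  · intro i j hij
    have hi : i.val < m := i.isLt
    have hj : j.val < m := j.isLt
    rw [Finset.disjoint_left]
    intro p hp hq
    rcases Finset.mem_image.mp hp with ⟨a, ha, hpa⟩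
    rcases Finset.mem_image.mp hq with ⟨b, hb, hpb⟩
    rw [hn1] at ha hb
    apply hij
    have hane := rr_ne hodd hm0 hi ha
    have hbne := rr_ne hodd hm0 hj hb
    -- sub-lemma: pair containing m+1 is {i+1, m+1}
    by_cases htop : (m + 1) ∈ p
    · have hpi : p = ({i.val + 1, m + 1} : Finset ℕ) := by
        subst hpa
        rcases Finset.mem_insert.mp htop with rfl | h
        · unfold rrPartner; rw [if_pos rfl, Finset.pair_comm]
        · rw [Finset.mem_singleton] at h
          by_cases hai : a = i.val + 1
          · subst hai
            unfold rrPartner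
            rw [if_neg (by omega), if_pos rfl]
          · by_cases han : a = m + 1
            · omega
            · exact absurd h.symm (rr_partner_ne_top hi ha han hai hm0)
      have hpj : p = ({j.val + 1, m + 1} : Finset ℕ) := by
        subst hpb
        rcases Finset.mem_insert.mp htop with rfl | h
        · unfold rrPartner; rw [if_pos rfl, Finset.pair_comm]
        · rw [Finset.mem_singleton] at h
          by_cases hbi : b = j.val + 1
          · subst hbi
            unfold rrPartner
            rw [if_neg (by omega), if_pos rfl]
          · by_cases hbn : b = m + 1
            · omega
            · exact absurd h.symm (rr_partner_ne_top hj hb hbn hbi hm0)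
      have : (i.val + 1 : ℕ) ∈ ({j.val + 1, m + 1} : Finset ℕ) := by
        rw [← hpj, hpi]; exact Finset.mem_insert_self _ _
      rcases Finset.mem_insert.mp this with h | h
      · exact Fin.ext (by omega)
      · rw [Finset.mem_singleton] at h; omega
    · -- neither element is m+1
      have han : a ≠ m + 1 := fun h => htop (by rw [← hpa, h]; exact Finset.mem_insert_self _ _)
      have hbn : b ≠ m + 1 := fun h => htop (by rw [← hpb, h]; exact Finset.mem_insert_self _ _)
      have hai : a ≠ i.val + 1 := by
        intro h
        apply htop
        rw [← hpa]
        have : rrPartner m i.val a = m + 1 := by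
          unfold rrPartner; rw [if_neg (by omega), if_pos h]
        rw [this]
        exact Finset.mem_insert.mpr (Or.inr (Finset.mem_singleton_self _))
      have hbj : b ≠ j.val + 1 := by
        intro h
        apply htop
        rw [← hpb]
        have : rrPartner m j.val b = m + 1 := by
          unfold rrPartner; rw [if_neg (by omega), if_pos h]
        rw [this]
        exact Finset.mem_insert.mpr (Or.inr (Finset.mem_singleton_self _))
      have hsum1 : ∑ x ∈ p, ((x - 1 : ℕ) : ZMod m) = 2 * (i.val : ZMod m) := by
        rw [← hpa, Finset.sum_pair hane.symm]
        exact rr_sum hm0 hi ha han hai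
      have hsum2 : ∑ x ∈ p, ((x - 1 : ℕ) : ZMod m) = 2 * (j.val : ZMod m) := by
        rw [← hpb, Finset.sum_pair hbne.symm]
        exact rr_sum hm0 hj hb hbn hbj
      have := rr_two_cancel hodd (hsum1.symm.trans hsum2)
      exact Fin.ext (rr_cast_eq hm0 hi hj this)
end

section
/- Let k be an odd positive integer and let F be an intersecting k-family with exactly k+1 blocks in which every vertex has degree exactly 2 and any two distinct blocks intersect in exactly one vertex (i.e., F is the family M_k). Then there exist k pairwise disjoint sets, each of cardinality (k+1)/2, each of which covers F. -/
open Finset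

namespace DT14

def pick (s : Finset ℕ) : ℕ := if h : s.Nonempty then s.min' h else 0

lemma pick_eq {s : Finset ℕ} {a : ℕ} (h : s = {a}) : pick s = a := by
  subst h
  rw [pick, dif_pos ⟨a, mem_singleton_self a⟩]
  exact Finset.min'_singleton a

variable {n : ℕ}

def pf (r : ZMod (n+1)) : Option (ZMod (n+1)) → Option (ZMod (n+1))
  | none => some r
  | some a => if a = r then none else some (2*r - a)

lemma sub_ne (r : ZMod (n+1)) {a : ZMod (n+1)} (h : a ≠ r) : 2*r - a ≠ r := by
  intro hh; exact h (by linear_combination -hh)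

lemma pf_invol (r : ZMod (n+1)) (x : Option (ZMod (n+1))) : pf r (pf r x) = x := by
  cases x with
  | none => simp [pf]
  | some a =>
    by_cases h : a = r
    · simp [pf, h]
    · simp only [pf, if_neg h, if_neg (sub_ne r h)]
      congr 1
      ring

lemma two_cancel (hodd : Odd (n+1)) {a b : ZMod (n+1)} (h : 2*a = 2*b) : a = b := by
  have hu : IsUnit (2 : ZMod (n+1)) := by
    have := (ZMod.isUnit_iff_coprime 2 (n+1)).mpr (Nat.coprime_two_left.mpr hodd)
    simpa using this
  exact hu.mul_left_cancel h

lemma pf_ne (hodd : Odd (n+1)) (r : ZMod (n+1)) (x : Option (ZMod (n+1))) : pf r x ≠ x := by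
  cases x with
  | none => simp [pf]
  | some a =>
    by_cases h : a = r
    · simp [pf, h]
    · simp only [pf, if_neg h, ne_eq, Option.some.injEq]
      intro hh
      exact h (two_cancel hodd (by linear_combination -hh))

/-- representative set inside ZMod for round r -/
def S1 (r : ZMod (n+1)) : Finset (ZMod (n+1)) :=
  univ.filter (fun a => a ≠ r ∧ a.val < (2*r - a).val)

def Rep (r : ZMod (n+1)) : Finset (Option (ZMod (n+1))) :=
  insert none ((S1 r).image some)

lemma card_S1 (hodd : Odd (n+1)) (r : ZMod (n+1)) : (S1 r).card = n / 2 := by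
  classical
  have heven : n % 2 = 0 := by
    rcases hodd with ⟨m, hm⟩; omega
  set S2 : Finset (ZMod (n+1)) := univ.filter (fun a => a ≠ r ∧ (2*r - a).val < a.val) with hS2
  have hcard : (S1 r).card = S2.card := by
    apply Finset.card_nbij (i := fun a => 2*r - a)
    · intro a ha
      simp only [S1, coe_filter, mem_filter, mem_coe, mem_univ, true_and, Set.mem_setOf_eq] at ha
      simp only [hS2, coe_filter, mem_filter, mem_coe, mem_univ, true_and, Set.mem_setOf_eq]
      refine ⟨sub_ne r ha.1, ?_⟩
      have h1 : 2*r - (2*r - a) = a := by ring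
      rw [h1]
      exact ha.2
    · intro a _ b _ hab
      simp only at hab
      linear_combination -hab
    · intro b hb
      simp only [hS2, coe_filter, mem_univ, true_and, Set.mem_setOf_eq] at hb
      refine ⟨2*r - b, ?_, by ring⟩
      simp only [S1, coe_filter, mem_univ, true_and, Set.mem_setOf_eq]
      refine ⟨sub_ne r hb.1, ?_⟩
      have h1 : 2*r - (2*r - b) = b := by ring
      rw [h1]
      exact hb.2
  have hdisj : Disjoint (S1 r) S2 := by
    rw [Finset.disjoint_left]
    intro a ha hb
    simp only [S1, mem_filter] at ha
    simp only [hS2, mem_filter] at hb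
    omega
  have hunion : S1 r ∪ S2 = univ.filter (fun a => a ≠ r) := by
    ext a
    simp only [mem_union, S1, hS2, mem_filter, mem_univ, true_and]
    constructor
    · rintro (⟨h1, _⟩ | ⟨h1, _⟩) <;> exact h1
    · intro h1
      have : a.val ≠ (2*r - a).val := by
        intro hv
        have hae : a = 2*r - a := ZMod.val_injective (n+1) hv
        exact h1 (two_cancel hodd (by linear_combination hae))
      rcases lt_or_gt_of_ne this with h | h
      · exact Or.inl ⟨h1, h⟩
      · exact Or.inr ⟨h1, h⟩
  have hcardu : (univ.filter (fun a : ZMod (n+1) => a ≠ r)).card = n := by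
    rw [Finset.filter_ne', Finset.card_erase_of_mem (mem_univ r)]
    simp [Finset.card_univ, ZMod.card]
  have := Finset.card_union_of_disjoint hdisj
  rw [hunion, hcardu, ← hcard] at this
  omega

end DT14

namespace DT14
variable {n : ℕ}
open Finset

lemma none_mem_Rep (r : ZMod (n+1)) : none ∈ Rep r := mem_insert_self _ _

lemma some_mem_Rep {r a : ZMod (n+1)} (h : a ∈ S1 r) : some a ∈ Rep r :=
  mem_insert_of_mem (mem_image_of_mem some h)

lemma mem_Rep_iff {r : ZMod (n+1)} {x : Option (ZMod (n+1))} :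
    x ∈ Rep r ↔ x = none ∨ ∃ a ∈ S1 r, x = some a := by
  simp only [Rep, mem_insert, mem_image]
  constructor
  · rintro (h | ⟨a, ha, rfl⟩)
    · exact Or.inl h
    · exact Or.inr ⟨a, ha, rfl⟩
  · rintro (h | ⟨a, ha, rfl⟩)
    · exact Or.inl h
    · exact Or.inr ⟨a, ha, rfl⟩

lemma card_Rep (hodd : Odd (n+1)) (r : ZMod (n+1)) : (Rep r).card = n / 2 + 1 := by
  rw [Rep, Finset.card_insert_of_notMem (by simp), Finset.card_image_of_injective _
    (Option.some_injective _), card_S1 hodd r]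

lemma mem_S1_iff {r a : ZMod (n+1)} : a ∈ S1 r ↔ a ≠ r ∧ a.val < (2*r - a).val := by
  simp [S1]

lemma rep_cover (hodd : Odd (n+1)) (r : ZMod (n+1)) (x : Option (ZMod (n+1))) :
    ∃ y ∈ Rep r, x = y ∨ x = pf r y := by
  cases x with
  | none => exact ⟨none, none_mem_Rep r, Or.inl rfl⟩
  | some a =>
    by_cases h : a = r
    · exact ⟨none, none_mem_Rep r, Or.inr (by simp [pf, h])⟩
    · by_cases h2 : a.val < (2*r - a).val
      · exact ⟨some a, some_mem_Rep (mem_S1_iff.mpr ⟨h, h2⟩), Or.inl rfl⟩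
      · refine ⟨some (2*r - a), some_mem_Rep (mem_S1_iff.mpr ⟨sub_ne r h, ?_⟩), Or.inr ?_⟩
        · have h3 : 2*r - (2*r - a) = a := by ring
          rw [h3]
          have h4 : (2*r - a) ≠ a := by
            intro hh
            exact h (two_cancel hodd (by linear_combination -hh))
          have h5 : (2*r-a).val ≠ a.val := fun hv => h4 (ZMod.val_injective (n+1) hv)
          omega
        · have h6 : (2*r - a) ≠ r := sub_ne r h
          simp only [pf, if_neg h6, Option.some.injEq]
          ring
  
lemma pf_not_mem_Rep {r : ZMod (n+1)} {y : Option (ZMod (n+1))} (hy : y ∈ Rep r) :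
    pf r y ∉ Rep r := by
  intro hmem
  rcases mem_Rep_iff.mp hy with rfl | ⟨a, ha, rfl⟩
  · -- pf r none = some r
    rcases mem_Rep_iff.mp hmem with h | ⟨b, hb, hb2⟩
    · simp [pf] at h
    · have hrb : r = b := by simpa [pf] using hb2
      exact (mem_S1_iff.mp hb).1 hrb.symm
  · obtain ⟨ha1, ha2⟩ := mem_S1_iff.mp ha
    rw [show pf r (some a) = some (2*r - a) from by simp [pf, if_neg ha1]] at hmem
    rcases mem_Rep_iff.mp hmem with h | ⟨b, hb, hb2⟩
    · simp at h
    · obtain rfl : 2*r - a = b := Option.some_injective _ hb2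
      obtain ⟨hb1, hb3⟩ := mem_S1_iff.mp hb
      have h3 : 2*r - (2*r - a) = a := by ring
      rw [h3] at hb3
      omega

lemma round_eq (hodd : Odd (n+1)) {r r' : ZMod (n+1)} {y z : Option (ZMod (n+1))}
    (hy : y ∈ Rep r) (hz : z ∈ Rep r')
    (h : (y = z ∧ pf r y = pf r' z) ∨ (y = pf r' z ∧ pf r y = z)) : r = r' := by
  rcases mem_Rep_iff.mp hy with rfl | ⟨a, ha, rfl⟩
  · rcases mem_Rep_iff.mp hz with rfl | ⟨b, hb, rfl⟩
    · rcases h with ⟨_, h2⟩ | ⟨h1, _⟩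
      · simpa [pf] using h2
      · simp [pf] at h1
    · obtain ⟨hb1, _⟩ := mem_S1_iff.mp hb
      rcases h with ⟨h1, _⟩ | ⟨h1, h2⟩
      · simp at h1
      · -- none = pf r' (some b), pf r none = some b
        have hbr : b = r' := by
          by_contra hne
          simp [pf, if_neg hne] at h1
        have : some r = some b := by simpa [pf] using h2
        obtain rfl : r = b := Option.some_injective _ this
        exact hbr
  · obtain ⟨ha1, _⟩ := mem_S1_iff.mp ha
    have hpa : pf r (some a) = some (2*r - a) := by simp [pf, if_neg ha1]
    rcases mem_Rep_iff.mp hz with rfl | ⟨b, hb, rfl⟩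
    · rcases h with ⟨h1, _⟩ | ⟨h1, h2⟩
      · simp at h1
      · -- some a = pf r' none = some r', pf r (some a) = none : contradiction
        rw [hpa] at h2
        simp at h2
    · obtain ⟨hb1, _⟩ := mem_S1_iff.mp hb
      have hpb : pf r' (some b) = some (2*r' - b) := by simp [pf, if_neg hb1]
      rcases h with ⟨h1, h2⟩ | ⟨h1, h2⟩
      · obtain rfl : a = b := Option.some_injective _ h1
        rw [hpa, hpb] at h2
        have h3 : 2*r - a = 2*r' - a := Option.some_injective _ h2
        exact two_cancel hodd (by linear_combination h3)
      · rw [hpb] at h1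
        rw [hpa] at h2
        have h3 : a = 2*r' - b := Option.some_injective _ h1
        have h4 : 2*r - a = b := Option.some_injective _ h2
        exact two_cancel hodd (by linear_combination h3 + h4)

end DT14


/-- If `k` is odd and `F` is the family `M_k` (an intersecting
`k`-family with `k+1` blocks, all vertex degrees `2`, any two distinct blocks meeting
in exactly one vertex), then there exist `k` pairwise disjoint sets of cardinality
`(k+1)/2`, each covering `F`. -/
theorem disjoint_transversals (k : ℕ) (hk : 0 < k) (hodd : Odd k)
    (F : Finset (Finset ℕ))
    (hFk : ∀ B ∈ F, B.card = k)
    (hFi : IsIntersecting F)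
    (hlen : F.card = k + 1)
    (hdeg : ∀ x ∈ vertexSet F, deg F x = 2)
    (hone : ∀ A ∈ F, ∀ B ∈ F, A ≠ B → (A ∩ B).card = 1) :
    ∃ T : Fin k → Finset ℕ,
      (∀ i, Covers (T i) F ∧ (T i).card = (k + 1) / 2) ∧
      (∀ i j, i ≠ j → Disjoint (T i) (T j)) := by
  classical
  obtain ⟨n, rfl⟩ : ∃ n, k = n + 1 := ⟨k - 1, by omega⟩
  -- index the blocks by Option (ZMod (n+1))
  set e : Option (ZMod (n+1)) ≃ {B // B ∈ F} :=
    ((Equiv.optionCongr (Equiv.refl (Fin (n+1)) : ZMod (n+1) ≃ Fin (n+1))).trans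
      finSuccEquivLast.symm).trans ((finCongr hlen.symm).trans F.equivFin.symm) with he
  set A : Option (ZMod (n+1)) → Finset ℕ := fun x => ((e x : {B // B ∈ F}) : Finset ℕ) with hA
  have hAmem : ∀ x, A x ∈ F := fun x => (e x).2
  have hAinj : Function.Injective A := fun x y h => e.injective (Subtype.ext h)
  have hAne : ∀ {x y}, x ≠ y → A x ≠ A y := fun h hh => h (hAinj hh)
  set v : Option (ZMod (n+1)) → Option (ZMod (n+1)) → ℕ :=
    fun x y => DT14.pick (A x ∩ A y) with hv
  have hveq : ∀ {x y}, x ≠ y → A x ∩ A y = {v x y} := by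
    intro x y h
    obtain ⟨a, ha⟩ := Finset.card_eq_one.mp (hone _ (hAmem x) _ (hAmem y) (hAne h))
    rw [ha, hv]
    simp only
    rw [DT14.pick_eq ha]
  have hvmem : ∀ {x y}, x ≠ y → v x y ∈ A x ∩ A y := by
    intro x y h
    rw [hveq h]
    exact mem_singleton_self _
  have hvinj : ∀ {x y x' y'}, x ≠ y → x' ≠ y' → v x y = v x' y' →
      (x = x' ∧ y = y') ∨ (x = y' ∧ y = x') := by
    intro x y x' y' hne hne' heq
    have hw := hvmem hne
    have hw' := hvmem hne'
    rw [← heq] at hw'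
    rw [mem_inter] at hw hw'
    have hvs : v x y ∈ vertexSet F :=
      Finset.mem_sup.mpr ⟨A x, hAmem x, hw.1⟩
    have hd2 : (F.filter (fun B => v x y ∈ B)).card = 2 := hdeg _ hvs
    have hpair : ({A x, A y} : Finset (Finset ℕ)) = F.filter (fun B => v x y ∈ B) := by
      apply Finset.eq_of_subset_of_card_le
      · intro B hB
        rcases mem_insert.mp hB with rfl | hB
        · exact mem_filter.mpr ⟨hAmem x, hw.1⟩
        · rw [mem_singleton.mp hB]
          exact mem_filter.mpr ⟨hAmem y, hw.2⟩
      · rw [hd2, Finset.card_pair (hAne hne)]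
    have hx' : A x' ∈ ({A x, A y} : Finset (Finset ℕ)) := by
      rw [hpair]
      exact mem_filter.mpr ⟨hAmem x', hw'.1⟩
    have hy' : A y' ∈ ({A x, A y} : Finset (Finset ℕ)) := by
      rw [hpair]
      exact mem_filter.mpr ⟨hAmem y', hw'.2⟩
    simp only [mem_insert, mem_singleton] at hx' hy'
    rcases hx' with h1 | h1
    · left
      refine ⟨(hAinj h1).symm, ?_⟩
      rcases hy' with h2 | h2
      · exact absurd (h1.trans h2.symm) (hAne hne')
      · exact (hAinj h2).symm
    · right
      rcases hy' with h2 | h2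
      · exact ⟨(hAinj h2).symm, (hAinj h1).symm⟩
      · exact absurd (h1.trans h2.symm) (hAne hne')
  -- rounds
  set rd : Fin (n+1) → ZMod (n+1) := fun m => ((m : ℕ) : ZMod (n+1)) with hrd
  have hrdinj : Function.Injective rd := by
    intro m m' h
    have h1 : (rd m).val = (rd m').val := by rw [h]
    rw [hrd] at h1
    simp only [ZMod.val_natCast_of_lt m.2, ZMod.val_natCast_of_lt m'.2] at h1
    exact Fin.ext h1
  refine ⟨fun m => (DT14.Rep (rd m)).image (fun x => v x (DT14.pf (rd m) x)), ?_, ?_⟩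
  · intro m
    constructor
    · -- covers
      intro B hB
      set x := e.symm ⟨B, hB⟩ with hx
      have hBx : A x = B := by rw [hA]; simp only [hx, Equiv.apply_symm_apply]
      obtain ⟨y, hy, hcase⟩ := DT14.rep_cover hodd (rd m) x
      have hne : y ≠ DT14.pf (rd m) y := (DT14.pf_ne hodd (rd m) y).symm
      have hmem : v y (DT14.pf (rd m) y) ∈ A x := by
        rcases hcase with h | h
        · rw [h]; exact (mem_inter.mp (hvmem hne)).1
        · rw [h]; exact (mem_inter.mp (hvmem hne)).2
      refine ⟨v y (DT14.pf (rd m) y), mem_inter.mpr ⟨mem_image_of_mem _ hy, ?_⟩⟩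
      rwa [hBx] at hmem
    · -- cardinality
      rw [Finset.card_image_of_injOn, DT14.card_Rep hodd (rd m)]
      · omega
      · intro y hy z hz heq
        have hne : y ≠ DT14.pf (rd m) y := (DT14.pf_ne hodd (rd m) y).symm
        have hne' : z ≠ DT14.pf (rd m) z := (DT14.pf_ne hodd (rd m) z).symm
        rcases hvinj hne hne' heq with ⟨h1, _⟩ | ⟨h1, _⟩
        · exact h1
        · exfalso
          rw [Finset.mem_coe] at hy hz
          exact DT14.pf_not_mem_Rep hz (h1 ▸ hy)
  · -- disjointness
    intro m m' hmm
    rw [Finset.disjoint_left]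
    intro w hw hw'
    obtain ⟨y, hy, hyw⟩ := mem_image.mp hw
    obtain ⟨z, hz, hzw⟩ := mem_image.mp hw'
    have hne : y ≠ DT14.pf (rd m) y := (DT14.pf_ne hodd (rd m) y).symm
    have hne' : z ≠ DT14.pf (rd m') z := (DT14.pf_ne hodd (rd m') z).symm
    have heq : v y (DT14.pf (rd m) y) = v z (DT14.pf (rd m') z) := hyw.trans hzw.symm
    have := DT14.round_eq hodd hy hz (by
      rcases hvinj hne hne' heq with ⟨h1, h2⟩ | ⟨h1, h2⟩
      · exact Or.inl ⟨h1, h2⟩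
      · exact Or.inr ⟨h1, h2⟩)
    exact hmm (hrdinj this)
end

section
/- Let k be an odd positive integer and let F be an intersecting k-family with exactly k+1 blocks in which every vertex has degree exactly 2 and any two distinct blocks intersect in exactly one vertex (i.e., F is the family M_k). Then the family T consisting of all transversals of F (each a set of cardinality (k+1)/2 covering F) has transversal size exactly k: the minimum cardinality of a set meeting every transversal of F equals k. -/
/-- If `k` is odd and `F` is the family `M_k`, then the family of all
transversals of `F` (the sets of cardinality `(k+1)/2` covering `F`) has transversal
size exactly `k`: the minimum cardinality of a set meeting every transversal of `F`
is `k`. -/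
theorem tau_of_transversal_family (k : ℕ) (hk : 0 < k) (hodd : Odd k)
    (F : Finset (Finset ℕ))
    (hFk : ∀ B ∈ F, B.card = k)
    (hFi : IsIntersecting F)
    (hlen : F.card = k + 1)
    (hdeg : ∀ x ∈ vertexSet F, deg F x = 2)
    (hone : ∀ A ∈ F, ∀ B ∈ F, A ≠ B → (A ∩ B).card = 1) :
    (∃ D : Finset ℕ, D.card = k ∧
      ∀ C : Finset ℕ, Covers C F → C.card = (k + 1) / 2 → (D ∩ C).Nonempty) ∧
    (∀ D : Finset ℕ,
      (∀ C : Finset ℕ, Covers C F → C.card = (k + 1) / 2 → (D ∩ C).Nonempty) →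
      k ≤ D.card) := by
  classical
  haveI : NeZero k := ⟨hk.ne'⟩
  constructor
  · -- upper bound: any single block works
    have hFne : F.Nonempty := by
      rw [← Finset.card_pos, hlen]; omega
    obtain ⟨B0, hB0⟩ := hFne
    refine ⟨B0, hFk B0 hB0, fun C hC _ => ?_⟩
    obtain ⟨x, hx⟩ := hC B0 hB0
    rw [Finset.inter_comm] at hx
    exact ⟨x, hx⟩
  · -- lower bound
    intro D hD
    -- enumerate the blocks by `Option (ZMod k)`
    have e : Option (ZMod k) ≃ {B // B ∈ F} :=
      Fintype.equivOfCardEq (by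
        simp [Fintype.card_option, ZMod.card, Fintype.card_coe, hlen])
    set Bk : Option (ZMod k) → Finset ℕ := fun v => (e v : Finset ℕ) with hBk
    have hBkF : ∀ v, Bk v ∈ F := fun v => (e v).2
    have hBkinj : Function.Injective Bk := fun a b h => e.injective (Subtype.ext h)
    have hBksurj : ∀ B ∈ F, ∃ v, Bk v = B := fun B hB =>
      ⟨e.symm ⟨B, hB⟩, by simp [hBk]⟩
    -- the common vertex of two blocks
    have hV : ∀ a b : Option (ZMod k), (Bk a ∩ Bk b).Nonempty :=
      fun a b => hFi _ (hBkF a) _ (hBkF b)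
    set vert : Option (ZMod k) → Option (ZMod k) → ℕ :=
      fun a b => (Bk a ∩ Bk b).min' (hV a b) with hvert
    have hvmem : ∀ a b, vert a b ∈ Bk a ∧ vert a b ∈ Bk b := fun a b =>
      Finset.mem_inter.mp (Finset.min'_mem _ (hV a b))
    have hsingle : ∀ a b, a ≠ b → Bk a ∩ Bk b = {vert a b} := by
      intro a b hab
      obtain ⟨x, hx⟩ := Finset.card_eq_one.mp
        (hone _ (hBkF a) _ (hBkF b) (fun h => hab (hBkinj h)))
      have hv : vert a b ∈ Bk a ∩ Bk b := Finset.min'_mem _ (hV a b)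
      rw [hx, Finset.mem_singleton] at hv
      rw [hx, hv]
    have hsymm : ∀ a b, a ≠ b → vert a b = vert b a := by
      intro a b hab
      have h1 := hsingle a b hab
      have h2 := hsingle b a hab.symm
      rw [Finset.inter_comm] at h1
      exact Finset.singleton_injective (h1.symm.trans h2)
    -- the only blocks containing `vert a b` are `Bk a` and `Bk b`
    have hvblocks : ∀ a b c, a ≠ b → vert a b ∈ Bk c → c = a ∨ c = b := by
      intro a b c hab hc
      have hxv : vert a b ∈ vertexSet F :=
        Finset.mem_sup.mpr ⟨Bk a, hBkF a, (hvmem a b).1⟩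
      have hdeg2 : (F.filter (fun B => vert a b ∈ B)).card = 2 := hdeg _ hxv
      have hsub : ({Bk a, Bk b} : Finset (Finset ℕ)) ⊆
          F.filter (fun B => vert a b ∈ B) := by
        intro B hB
        rcases Finset.mem_insert.mp hB with h | h
        · exact Finset.mem_filter.mpr ⟨h ▸ hBkF a, h ▸ (hvmem a b).1⟩
        · rw [Finset.mem_singleton] at h
          exact Finset.mem_filter.mpr ⟨h ▸ hBkF b, h ▸ (hvmem a b).2⟩
      have hc2 : ({Bk a, Bk b} : Finset (Finset ℕ)).card = 2 :=
        Finset.card_pair (fun h => hab (hBkinj h))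
      have heq : ({Bk a, Bk b} : Finset (Finset ℕ)) =
          F.filter (fun B => vert a b ∈ B) :=
        Finset.eq_of_subset_of_card_le hsub (by rw [hdeg2, hc2])
      have hmem : Bk c ∈ ({Bk a, Bk b} : Finset (Finset ℕ)) := by
        rw [heq]; exact Finset.mem_filter.mpr ⟨hBkF c, hc⟩
      rcases Finset.mem_insert.mp hmem with h | h
      · exact Or.inl (hBkinj h)
      · rw [Finset.mem_singleton] at h
        exact Or.inr (hBkinj h)
    -- vertices determine unordered pairs of blocks
    have hvinj : ∀ a b c d, a ≠ b → c ≠ d → vert a b = vert c d →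
        (c = a ∧ d = b) ∨ (c = b ∧ d = a) := by
      intro a b c d hab hcd heq
      have h1 : vert a b ∈ Bk c := heq ▸ (hvmem c d).1
      have h2 : vert a b ∈ Bk d := heq ▸ (hvmem c d).2
      rcases hvblocks a b c hab h1 with hc | hc <;>
        rcases hvblocks a b d hab h2 with hd | hd
      · exact absurd (hc.trans hd.symm) hcd
      · exact Or.inl ⟨hc, hd⟩
      · exact Or.inr ⟨hc, hd⟩
      · exact absurd (hc.trans hd.symm) hcd
    -- 2 is invertible mod k
    have h2u : IsUnit (2 : ZMod k) := by
      have : ((2 : ℕ) : ZMod k) = (2 : ZMod k) := by push_cast; ring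
      rw [← this, ZMod.isUnit_iff_coprime]
      exact Nat.coprime_two_left.mpr hodd
    obtain ⟨v2, hv2⟩ := h2u.exists_right_inv
    have hcancel2 : ∀ x y : ZMod k, 2 * x = 2 * y → x = y := by
      intro x y h
      have h' : v2 * (2 * x) = v2 * (2 * y) := by rw [h]
      rwa [← mul_assoc, ← mul_assoc, mul_comm v2 2, hv2, one_mul, one_mul] at h'
    have hhalf : ∀ i : ZMod k, 2 * (i * v2) = i := by
      intro i
      calc 2 * (i * v2) = i * (2 * v2) := by ring
        _ = i := by rw [hv2, mul_one]
    -- the 1-factorization covers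
    set g : ZMod k → ZMod k → ℕ := fun i x =>
      if 2 * x = i then vert (some x) none else vert (some x) (some (i - x)) with hg
    set Cov : ZMod k → Finset ℕ := fun i => Finset.univ.image (g i) with hCovdef
    have hne_pair : ∀ (i y : ZMod k), 2 * y ≠ i →
        (some y : Option (ZMod k)) ≠ some (i - y) := by
      intro i y h heq
      injection heq with h'
      apply h
      rw [two_mul]
      nth_rewrite 2 [h']
      ring
    have hgB : ∀ i x, g i x ∈ Bk (some x) := by
      intro i x
      simp only [hg]
      split
      · exact (hvmem _ _).1
      · exact (hvmem _ _).1
    have hCovers : ∀ i, Covers (Cov i) F := by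
      intro i B hB
      obtain ⟨v, rfl⟩ := hBksurj B hB
      match v with
      | some x =>
        exact ⟨g i x, Finset.mem_inter.mpr
          ⟨Finset.mem_image.mpr ⟨x, Finset.mem_univ x, rfl⟩, hgB i x⟩⟩
      | none =>
        refine ⟨g i (i * v2), Finset.mem_inter.mpr
          ⟨Finset.mem_image.mpr ⟨i * v2, Finset.mem_univ _, rfl⟩, ?_⟩⟩
        have : g i (i * v2) = vert (some (i * v2)) none := by
          simp only [hg, if_pos (hhalf i)]
        rw [this]
        exact (hvmem _ _).2
    -- membership in two different covers is impossible
    have hCdisj : ∀ i j x, x ∈ Cov i → x ∈ Cov j → i = j := by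
      intro i j x hxi hxj
      obtain ⟨a, -, ha⟩ := Finset.mem_image.mp hxi
      obtain ⟨b, -, hb⟩ := Finset.mem_image.mp hxj
      have hab : g i a = g j b := ha.trans hb.symm
      by_cases h1 : 2 * a = i <;> by_cases h2 : 2 * b = j
      · have hA : g i a = vert (some a) none := by simp only [hg, if_pos h1]
        have hB : g j b = vert (some b) none := by simp only [hg, if_pos h2]
        rw [hA, hB] at hab
        rcases hvinj _ _ _ _ (Option.some_ne_none a) (Option.some_ne_none b)
          hab with ⟨h3, -⟩ | ⟨h3, -⟩
        · injection h3 with h3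
          rw [← h1, ← h2, h3]
        · exact absurd h3 (Option.some_ne_none b)
      · have hA : g i a = vert (some a) none := by simp only [hg, if_pos h1]
        have hB : g j b = vert (some b) (some (j - b)) := by simp only [hg, if_neg h2]
        rw [hA, hB] at hab
        rcases hvinj _ _ _ _ (Option.some_ne_none a) (hne_pair j b h2)
          hab with ⟨-, h4⟩ | ⟨h3, -⟩
        · exact absurd h4 (Option.some_ne_none _)
        · exact absurd h3 (Option.some_ne_none b)
      · have hA : g i a = vert (some a) (some (i - a)) := by simp only [hg, if_neg h1]
        have hB : g j b = vert (some b) none := by simp only [hg, if_pos h2]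
        rw [hA, hB] at hab
        rcases hvinj _ _ _ _ (hne_pair i a h1) (Option.some_ne_none b)
          hab with ⟨-, h4⟩ | ⟨-, h4⟩
        · exact absurd h4.symm (Option.some_ne_none _)
        · exact absurd h4.symm (Option.some_ne_none _)
      · have hA : g i a = vert (some a) (some (i - a)) := by simp only [hg, if_neg h1]
        have hB : g j b = vert (some b) (some (j - b)) := by simp only [hg, if_neg h2]
        rw [hA, hB] at hab
        rcases hvinj _ _ _ _ (hne_pair i a h1) (hne_pair j b h2)
          hab with ⟨h3, h4⟩ | ⟨h3, h4⟩
        · injection h3 with h3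
          injection h4 with h4
          linear_combination -h4 - h3
        · injection h3 with h3
          injection h4 with h4
          linear_combination -h3 - h4
    -- each cover has cardinality (k+1)/2
    have hcardC : ∀ i, (Cov i).card = (k + 1) / 2 := by
      intro i
      set b0 := g i (i * v2) with hb0
      have hb0C : b0 ∈ Cov i := Finset.mem_image.mpr ⟨i * v2, Finset.mem_univ _, rfl⟩
      have hb0v : b0 = vert (some (i * v2)) none := by
        simp only [hb0, hg, if_pos (hhalf i)]
      -- fiber over b0 is a singleton
      have hfib0 : (Finset.univ.filter (fun y => g i y = b0)).card = 1 := by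
        have : Finset.univ.filter (fun y => g i y = b0) = {i * v2} := by
          ext y
          simp only [Finset.mem_filter, Finset.mem_univ, true_and, Finset.mem_singleton]
          constructor
          · intro hy
            by_cases hy2 : 2 * y = i
            · exact hcancel2 y (i * v2) (by rw [hy2, hhalf])
            · have hyv : g i y = vert (some y) (some (i - y)) := by
                simp only [hg, if_neg hy2]
              rw [hyv, hb0v] at hy
              rcases hvinj _ _ _ _ (hne_pair i y hy2) (Option.some_ne_none _)
                hy with ⟨-, h4⟩ | ⟨-, h4⟩
              · exact absurd h4.symm (Option.some_ne_none _)
              · exact absurd h4.symm (Option.some_ne_none _)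
          · rintro rfl; rfl
        rw [this, Finset.card_singleton]
      -- all other fibers have two elements
      have hfib : ∀ b ∈ Cov i, b ≠ b0 →
          (Finset.univ.filter (fun y => g i y = b)).card = 2 := by
        intro b hbC hbne
        obtain ⟨x, -, hx⟩ := Finset.mem_image.mp hbC
        have hx2 : 2 * x ≠ i := by
          intro h
          apply hbne
          rw [← hx, hb0]
          congr 1
          exact hcancel2 x (i * v2) (by rw [h, hhalf])
        have hxv : b = vert (some x) (some (i - x)) := by
          rw [← hx]; simp only [hg, if_neg hx2]
        have hxne : x ≠ i - x := by
          intro h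
          apply hx2
          rw [two_mul]
          nth_rewrite 2 [h]
          ring
        have hix2 : 2 * (i - x) ≠ i := by
          intro h
          apply hx2
          linear_combination -h
        have hfe : Finset.univ.filter (fun y => g i y = b) = {x, i - x} := by
          ext y
          simp only [Finset.mem_filter, Finset.mem_univ, true_and,
            Finset.mem_insert, Finset.mem_singleton]
          constructor
          · intro hy
            by_cases hy2 : 2 * y = i
            · exfalso
              have hyv : g i y = vert (some y) none := by
                simp only [hg, if_pos hy2]
              rw [hyv, hxv] at hy
              rcases hvinj _ _ _ _ (Option.some_ne_none y)
                (hne_pair i x hx2) hy with ⟨-, h4⟩ | ⟨h3, -⟩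
              · exact absurd h4 (Option.some_ne_none _)
              · exact absurd h3 (Option.some_ne_none _)
            · have hyv : g i y = vert (some y) (some (i - y)) := by
                simp only [hg, if_neg hy2]
              rw [hyv, hxv] at hy
              rcases hvinj _ _ _ _ (hne_pair i y hy2)
                (hne_pair i x hx2) hy with ⟨h3, h4⟩ | ⟨h3, h4⟩
              · injection h3 with h3; exact Or.inl h3.symm
              · injection h4 with h4; exact Or.inr h4.symm
          · intro hy
            rcases hy with rfl | rfl
            · exact hx
            · have h1 : g i (i - x) = vert (some (i - x)) (some (i - (i - x))) := by
                simp only [hg, if_neg hix2]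
              have h2 : i - (i - x) = x := by ring
              rw [h1, h2, hsymm _ _ (hne_pair i x hx2).symm, hxv]
        rw [hfe, Finset.card_pair hxne]
      -- count
      have hcount : k = ∑ b ∈ Cov i, (Finset.univ.filter (fun y => g i y = b)).card := by
        have := Finset.card_eq_sum_card_image (g i) (Finset.univ : Finset (ZMod k))
        rw [Finset.card_univ, ZMod.card] at this
        exact this
      rw [← Finset.add_sum_erase _ _ hb0C, hfib0] at hcount
      have hsum2 : ∑ b ∈ (Cov i).erase b0,
          (Finset.univ.filter (fun y => g i y = b)).card =
          2 * ((Cov i).erase b0).card := by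
        rw [Finset.sum_congr rfl (fun b hb => hfib b (Finset.mem_of_mem_erase hb)
          (Finset.ne_of_mem_erase hb))]
        rw [Finset.sum_const, smul_eq_mul, mul_comm]
      rw [hsum2, Finset.card_erase_of_mem hb0C] at hcount
      have hpos : 1 ≤ (Cov i).card := Finset.card_pos.mpr ⟨b0, hb0C⟩
      omega
    -- choose an element of D in each cover
    have hDne : ∀ i : ZMod k, (D ∩ Cov i).Nonempty :=
      fun i => hD (Cov i) (hCovers i) (hcardC i)
    choose f hf using hDne
    have hfD : ∀ i, f i ∈ D := fun i => (Finset.mem_inter.mp (hf i)).1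
    have hfC : ∀ i, f i ∈ Cov i := fun i => (Finset.mem_inter.mp (hf i)).2
    have hfinj : Function.Injective f := fun i j h =>
      hCdisj i j (f i) (hfC i) (h ▸ hfC j)
    calc k = Fintype.card (ZMod k) := (ZMod.card k).symm
      _ = (Finset.univ.image f).card := by
          rw [Finset.card_image_of_injective _ hfinj, Finset.card_univ]
      _ ≤ D.card := Finset.card_le_card (fun x hx => by
          obtain ⟨i, -, rfl⟩ := Finset.mem_image.mp hx
          exact hfD i)
end

section
/- For every integer m ≥ 2, setting k = 2^m − 1, there exists an intersecting k-family with exactly 2k+1 blocks in which every vertex has degree exactly 3; consequently its transversal size is at least (2k+1)/3. -/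
namespace DegThree

/-- The three points of the projective line through `p` and `q` over `𝔽₂`. -/
def pts (p q : ℕ) : Finset ℕ := {p, q, p ^^^ q}

/-- An injective numeric code for the line through `p` and `q`. -/
def lineOf (p q : ℕ) : ℕ := ∑ i ∈ pts p q, 2 ^ i

/-- The nonzero points of `𝔽₂ⁿ`. -/
def S (n : ℕ) : Finset ℕ := (Finset.range (2 ^ n)).erase 0

/-- The pencil of lines through `p`. -/
def blk (n p : ℕ) : Finset ℕ := (((S n).erase p)).image (lineOf p)

/-- The family of all pencils. -/
def Fam (n : ℕ) : Finset (Finset ℕ) := (S n).image (blk n)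

lemma mem_S {n p : ℕ} : p ∈ S n ↔ p ≠ 0 ∧ p < 2 ^ n := by
  simp [S, Finset.mem_erase]

lemma card_S (n : ℕ) : (S n).card = 2 ^ n - 1 := by
  rw [S, Finset.card_erase_of_mem (by simp [Nat.pow_pos, Nat.two_pow_pos]),
    Finset.card_range]

lemma xor_mem_S {n p q : ℕ} (hp : p ∈ S n) (hq : q ∈ S n) (hpq : p ≠ q) :
    p ^^^ q ∈ S n := by
  rw [mem_S] at *
  exact ⟨fun h => hpq (xor_eq_zero_iff.1 h), Nat.xor_lt_two_pow hp.2 hq.2⟩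

lemma xor_ne_left {p q : ℕ} (hq : q ≠ 0) : p ^^^ q ≠ p :=
  fun h => hq (by rw [← xor_cancel_left p q, h, Nat.xor_self])

lemma xor_ne_right {p q : ℕ} (hp : p ≠ 0) : p ^^^ q ≠ q :=
  fun h => hp (by rw [← xor_cancel_right p q, h, Nat.xor_self])

lemma mem_pts_left (p q : ℕ) : p ∈ pts p q := by simp [pts]
lemma mem_pts_mid (p q : ℕ) : q ∈ pts p q := by simp [pts]
lemma mem_pts_xor (p q : ℕ) : p ^^^ q ∈ pts p q := by simp [pts]

lemma pts_comm (p q : ℕ) : pts p q = pts q p := by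
  simp only [pts, Nat.xor_comm p q]
  ext x; simp; tauto

lemma pts_xor_right (p q : ℕ) : pts p (p ^^^ q) = pts p q := by
  simp only [pts, xor_cancel_left]
  ext x; simp; tauto

lemma pts_third (p q : ℕ) : pts (p ^^^ q) p = pts p q := by
  simp only [pts]
  have h3 : p ^^^ q ^^^ p = q := by rw [Nat.xor_comm p q]; exact xor_cancel_right q p
  rw [h3]
  ext x; simp; tauto

lemma lineOf_eq_iff {p q p' q' : ℕ} : lineOf p q = lineOf p' q' ↔ pts p q = pts p' q' := by
  constructor
  · intro h
    have := congrArg (fun n => n.bitIndices.toFinset) h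
    simpa [lineOf] using this
  · intro h; simp [lineOf, h]

lemma card_pts {p q : ℕ} (hp : p ≠ 0) (hq : q ≠ 0) (hpq : p ≠ q) : (pts p q).card = 3 := by
  have h1 : p ^^^ q ≠ p := xor_ne_left hq
  have h2 : p ^^^ q ≠ q := xor_ne_right hp
  rw [pts, Finset.card_insert_of_notMem (by simp [hpq, h1.symm]),
    Finset.card_insert_of_notMem (by simp [h2.symm])]
  simp

lemma pts_subset_S {n p q : ℕ} (hp : p ∈ S n) (hq : q ∈ S n) (hpq : p ≠ q) :
    pts p q ⊆ S n := by
  intro x hx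
  simp only [pts, Finset.mem_insert, Finset.mem_singleton] at hx
  rcases hx with rfl | rfl | rfl
  · exact hp
  · exact hq
  · exact xor_mem_S hp hq hpq

lemma mem_blk {n p x : ℕ} : x ∈ blk n p ↔ ∃ q ∈ (S n).erase p, lineOf p q = x := by
  simp [blk]

lemma two_mul_card_blk {n p : ℕ} (hp : p ∈ S n) :
    2 * (blk n p).card = 2 ^ n - 2 := by
  have hcard : ((S n).erase p).card = 2 ^ n - 2 := by
    rw [Finset.card_erase_of_mem hp, card_S]; omega
  have key := Finset.card_eq_sum_card_image (lineOf p) ((S n).erase p)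
  rw [← blk] at key
  have hfib : ∀ x ∈ blk n p,
      (((S n).erase p).filter (fun r => lineOf p r = x)).card = 2 := by
    intro x hx
    obtain ⟨q, hq, rfl⟩ := mem_blk.1 hx
    have hq' := Finset.mem_erase.1 hq
    have hp0 : p ≠ 0 := (mem_S.1 hp).1
    have hq0 : q ≠ 0 := (mem_S.1 (hq'.2)).1
    have hpq : p ≠ q := fun h => hq'.1 h.symm
    have hfe : ((S n).erase p).filter (fun r => lineOf p r = lineOf p q)
        = {q, p ^^^ q} := by
      ext r
      simp only [Finset.mem_filter, Finset.mem_insert, Finset.mem_singleton]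
      constructor
      · rintro ⟨hr, hline⟩
        have hpts := lineOf_eq_iff.1 hline
        have : r ∈ pts p q := hpts ▸ mem_pts_mid p r
        simp only [pts, Finset.mem_insert, Finset.mem_singleton] at this
        rcases this with rfl | rfl | rfl
        · exact absurd rfl (Finset.mem_erase.1 hr).1
        · exact Or.inl rfl
        · exact Or.inr rfl
      · rintro (rfl | rfl)
        · exact ⟨hq, rfl⟩
        · refine ⟨Finset.mem_erase.2 ⟨?_, xor_mem_S hp hq'.2 hpq⟩,
            lineOf_eq_iff.2 (pts_xor_right p q)⟩
          exact xor_ne_left hq0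
    rw [hfe]
    have hne : q ≠ p ^^^ q := (xor_ne_right hp0).symm
    rw [Finset.card_insert_of_notMem (by simpa using hne), Finset.card_singleton]
  rw [Finset.sum_congr rfl hfib, Finset.sum_const, smul_eq_mul] at key
  omega

lemma blk_mem_of_mem_pts {n p₀ q₀ p : ℕ} (hp₀ : p₀ ∈ S n) (hq₀ : q₀ ∈ (S n).erase p₀)
    (hp : p ∈ pts p₀ q₀) : lineOf p₀ q₀ ∈ blk n p := by
  have hq₀' := Finset.mem_erase.1 hq₀
  have hp₀0 : p₀ ≠ 0 := (mem_S.1 hp₀).1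
  have hq₀0 : q₀ ≠ 0 := (mem_S.1 hq₀'.2).1
  have hpq : p₀ ≠ q₀ := fun h => hq₀'.1 h.symm
  simp only [pts, Finset.mem_insert, Finset.mem_singleton] at hp
  rcases hp with rfl | rfl | rfl
  · exact mem_blk.2 ⟨q₀, hq₀, rfl⟩
  · exact mem_blk.2 ⟨p₀, Finset.mem_erase.2 ⟨hpq, hp₀⟩,
      lineOf_eq_iff.2 (pts_comm p p₀)⟩
  · refine mem_blk.2 ⟨p₀, Finset.mem_erase.2 ⟨?_, hp₀⟩,
      lineOf_eq_iff.2 (pts_third p₀ q₀)⟩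
    exact (xor_ne_left hq₀0).symm

lemma filter_blk_eq {n p₀ q₀ : ℕ} (hp₀ : p₀ ∈ S n) (hq₀ : q₀ ∈ (S n).erase p₀) :
    (S n).filter (fun p => lineOf p₀ q₀ ∈ blk n p) = pts p₀ q₀ := by
  have hq₀' := Finset.mem_erase.1 hq₀
  have hpq : p₀ ≠ q₀ := fun h => hq₀'.1 h.symm
  ext p
  simp only [Finset.mem_filter]
  constructor
  · rintro ⟨-, hx⟩
    obtain ⟨q, hq, hline⟩ := mem_blk.1 hx
    have hpts := lineOf_eq_iff.1 hline
    exact hpts ▸ mem_pts_left p q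
  · intro hp
    exact ⟨pts_subset_S hp₀ hq₀'.2 hpq hp, blk_mem_of_mem_pts hp₀ hq₀ hp⟩

lemma blk_injOn {n : ℕ} (hn : 3 ≤ n) :
    Set.InjOn (blk n) (S n) := by
  intro p hp p' hp' hblk
  by_contra hne
  -- choose q ∈ S n avoiding p, p', p ^^^ p'
  have hcard : 0 < (((((S n).erase p).erase p').erase (p ^^^ p'))).card := by
    have h1 : (S n).card = 2 ^ n - 1 := card_S n
    have h8 : 8 ≤ 2 ^ n := by calc (8:ℕ) = 2 ^ 3 := rfl
                                   _ ≤ 2 ^ n := Nat.pow_le_pow_right (by norm_num) hn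
    have e1 := Finset.card_erase_of_mem (α := ℕ) (s := S n) (a := p) hp
    have le1 : ((S n).erase p).card ≥ (S n).card - 1 := by rw [e1]
    have le2 : (((S n).erase p).erase p').card ≥ ((S n).erase p).card - 1 :=
      Finset.pred_card_le_card_erase
    have le3 : ((((S n).erase p).erase p').erase (p ^^^ p')).card
        ≥ (((S n).erase p).erase p').card - 1 := Finset.pred_card_le_card_erase
    omega
  obtain ⟨q, hq⟩ := Finset.card_pos.1 hcard
  have hq3 := Finset.mem_erase.1 hq
  have hq2 := Finset.mem_erase.1 hq3.2
  have hq1 := Finset.mem_erase.1 hq2.2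
  have hline : lineOf p q ∈ blk n p' := by
    rw [← hblk]; exact mem_blk.2 ⟨q, Finset.mem_erase.2 ⟨hq1.1, hq1.2⟩, rfl⟩
  obtain ⟨q', hq', hl⟩ := mem_blk.1 hline
  have hpts := lineOf_eq_iff.1 hl
  have : p' ∈ pts p q := hpts ▸ mem_pts_left p' q'
  simp only [pts, Finset.mem_insert, Finset.mem_singleton] at this
  rcases this with rfl | rfl | h
  · exact hne rfl
  · exact hq2.1 rfl
  · apply hq3.1
    rw [h, xor_cancel_left]

lemma card_Fam {n : ℕ} (hn : 3 ≤ n) : (Fam n).card = 2 ^ n - 1 := by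
  rw [Fam, Finset.card_image_of_injOn (blk_injOn hn), card_S]

lemma deg_Fam {n x : ℕ} (hn : 3 ≤ n) (hx : x ∈ vertexSet (Fam n)) :
    deg (Fam n) x = 3 := by
  rw [vertexSet, Finset.mem_sup] at hx
  obtain ⟨B, hB, hxB⟩ := hx
  obtain ⟨p₀, hp₀, rfl⟩ := Finset.mem_image.1 hB
  obtain ⟨q₀, hq₀, rfl⟩ := mem_blk.1 hxB
  have hq₀' := Finset.mem_erase.1 hq₀
  rw [deg, Fam, Finset.filter_image, Finset.card_image_of_injOn
    ((blk_injOn hn).mono (fun a ha => (Finset.mem_filter.1 ha).1)),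
    filter_blk_eq hp₀ hq₀,
    card_pts (mem_S.1 hp₀).1 (mem_S.1 hq₀'.2).1 (fun h => hq₀'.1 h.symm)]

lemma deg_le {n x : ℕ} (hn : 3 ≤ n) : deg (Fam n) x ≤ 3 := by
  by_cases hx : x ∈ vertexSet (Fam n)
  · exact (deg_Fam hn hx).le
  · have : (Fam n).filter (fun B => x ∈ B) = ∅ := by
      rw [Finset.filter_eq_empty_iff]
      intro B hB hxB
      exact hx (by rw [vertexSet, Finset.mem_sup]; exact ⟨B, hB, hxB⟩)
    simp [deg, this]

lemma cover_bound {F : Finset (Finset ℕ)} {C : Finset ℕ}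
    (hdeg : ∀ x, deg F x ≤ 3) (hC : Covers C F) : F.card ≤ 3 * C.card := by
  have hsub : F ⊆ C.biUnion (fun x => F.filter (fun B => x ∈ B)) := by
    intro B hB
    obtain ⟨x, hx⟩ := hC B hB
    rw [Finset.mem_inter] at hx
    exact Finset.mem_biUnion.2 ⟨x, hx.1, Finset.mem_filter.2 ⟨hB, hx.2⟩⟩
  calc F.card ≤ (C.biUnion (fun x => F.filter (fun B => x ∈ B))).card :=
        Finset.card_le_card hsub
    _ ≤ ∑ x ∈ C, (F.filter (fun B => x ∈ B)).card := Finset.card_biUnion_le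
    _ ≤ ∑ _x ∈ C, 3 := Finset.sum_le_sum (fun x _ => hdeg x)
    _ = 3 * C.card := by rw [Finset.sum_const, smul_eq_mul, mul_comm]

end DegThree

/-- For every `m ≥ 2` and `k = 2^m - 1` there is an intersecting
`k`-family with exactly `2k+1` blocks in which every vertex has degree exactly `3`;
consequently its transversal size is at least `(2k+1)/3`. -/
theorem exists_degree_three_family (m : ℕ) (hm : 2 ≤ m) (k : ℕ) (hk : k = 2 ^ m - 1) :
    ∃ F : Finset (Finset ℕ),
      (∀ B ∈ F, B.card = k) ∧
      IsIntersecting F ∧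
      F.card = 2 * k + 1 ∧
      (∀ x ∈ vertexSet F, deg F x = 3) ∧
      (∀ C : Finset ℕ, Covers C F → 2 * k + 1 ≤ 3 * C.card) := by
  have hn3 : 3 ≤ m + 1 := by omega
  have hpow : 2 ^ (m + 1) = 2 * 2 ^ m := by rw [pow_succ, mul_comm]
  have hm1 : 2 ≤ 2 ^ m :=
    le_trans (by norm_num : (2:ℕ) ≤ 2 ^ 1) (Nat.pow_le_pow_right (by norm_num) (by omega))
  refine ⟨DegThree.Fam (m + 1), ?_, ?_, ?_, ?_, ?_⟩
  · intro B hB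
    obtain ⟨p, hp, rfl⟩ := Finset.mem_image.1 hB
    have := DegThree.two_mul_card_blk hp
    omega
  · intro A hA B hB
    obtain ⟨p, hp, rfl⟩ := Finset.mem_image.1 hA
    obtain ⟨p', hp', rfl⟩ := Finset.mem_image.1 hB
    by_cases hpp : p = p'
    · subst hpp
      rw [Finset.inter_self]
      have := DegThree.two_mul_card_blk hp
      rw [← Finset.card_pos]
      omega
    · refine ⟨DegThree.lineOf p p', Finset.mem_inter.2 ⟨?_, ?_⟩⟩
      · exact DegThree.mem_blk.2 ⟨p', Finset.mem_erase.2 ⟨fun h => hpp h.symm, hp'⟩, rfl⟩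
      · exact DegThree.mem_blk.2 ⟨p, Finset.mem_erase.2 ⟨hpp, hp⟩,
          DegThree.lineOf_eq_iff.2 (DegThree.pts_comm p' p)⟩
  · rw [DegThree.card_Fam hn3]; omega
  · intro x hx; exact DegThree.deg_Fam hn3 hx
  · intro C hC
    have := DegThree.cover_bound (fun x => DegThree.deg_le hn3) hC
    rw [DegThree.card_Fam hn3] at this
    omega
end
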